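/- arXiv:hep-th/9409079 — 12 statements merged into one kernel-verified Lean document; each statement's English description precedes it below -/
import Mathlib

section
/- Let R be a commutative ring, q a unit of R, and A an associative unital R-algebra. Suppose a, b, c, d and a′, b′, c′, d′ are elements of A such that each of a, b, c, d commutes with each of a′, b′, c′, d′, and both quadruples (a,b,c,d) and (a′,b′,c′,d′) satisfy the fun_q(GL₂) relations. Define a″ = a·a′ + b·c′, b″ = a·b′ + b·d′, c″ = c·a′ + d·c′, d″ = c·b′ + d·d′ (the entries of the matrix tensor product T·T′). Then the quadruple (a″, b″, c″, d″) again satisfies the fun_q(GL₂) relations, and a″·d″ − q·b″·c″ = (a·d − q·b·c)·(a′·d′ − q·b′·c′); in particular if a·d − q·b·c = 1 and a′·d′ − q·b′·c′ = 1 then a″·d″ − q·b″·c″ = 1. -/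
/-!
Since every primed generator commutes with every unprimed one, a product of two entries of
`T·T′` expands into a sum of terms `(x * y) * (x' * y')`, with `x, y` unprimed and `x', y'`
primed. The `fun_q(GL₂)` relations rewrite every quadratic word in `a, b, c, d` as a
combination of the ordered words (`a < b < c < d`), and likewise for the primed generators,
so both sides of each identity become combinations of products of ordered words, which are
compared coefficientwise using only `q * q⁻¹ = 1`.
-/

/-- The `fun_q(GL₂)` relations for a quadruple `(a, b, c, d)` of elements of an
associative unital `R`-algebra `A`, with `q` a unit of `R`. -/
def FunqGL2 {R A : Type*} [CommRing R] [Ring A] [Algebra R A]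
    (q : Rˣ) (a b c d : A) : Prop :=
  a * b = (q : R) • (b * a) ∧ a * c = (q : R) • (c * a) ∧
  b * d = (q : R) • (d * b) ∧ c * d = (q : R) • (d * c) ∧
  b * c = c * b ∧ a * d - d * a = ((q : R) - ((q⁻¹ : Rˣ) : R)) • (b * c)

theorem mul_mul_mul_comm_of_mem {M : Type*} [Semigroup M] {S S' : Set M}
    (hcomm : ∀ x ∈ S, ∀ y ∈ S', Commute x y) {x y x' y' : M} (hy : y ∈ S) (hx' : x' ∈ S') :
    x * x' * (y * y') = x * y * (x' * y') :=
  (hcomm y hy x' hx').symm.mul_mul_mul_comm x y'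

section

variable {R A : Type*} [CommRing R] [Ring A] [Algebra R A]

def qdet (q : Rˣ) (a b c d : A) : A :=
  a * d - (q : R) • (b * c)

variable {q : Rˣ}

namespace FunqGL2

variable {a b c d : A}

theorem straighten (h : FunqGL2 q a b c d) :
    b * a = ((q⁻¹ : Rˣ) : R) • (a * b) ∧ c * a = ((q⁻¹ : Rˣ) : R) • (a * c) ∧
    d * b = ((q⁻¹ : Rˣ) : R) • (b * d) ∧ d * c = ((q⁻¹ : Rˣ) : R) • (c * d) ∧
    c * b = b * c ∧ d * a = a * d - ((q : R) - ((q⁻¹ : Rˣ) : R)) • (b * c) := by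
  obtain ⟨hab, hac, hbd, hcd, hbc, had⟩ := h
  exact ⟨(inv_smul_eq_iff (g := q).mpr hab).symm, (inv_smul_eq_iff (g := q).mpr hac).symm,
    (inv_smul_eq_iff (g := q).mpr hbd).symm, (inv_smul_eq_iff (g := q).mpr hcd).symm,
    hbc.symm, by rw [← had, sub_sub_cancel]⟩

end FunqGL2

variable {a b c d a' b' c' d' : A}

theorem FunqGL2.mul_of_commute (h : FunqGL2 q a b c d) (h' : FunqGL2 q a' b' c' d')
    (hcomm : ∀ x ∈ ({a, b, c, d} : Set A), ∀ y ∈ ({a', b', c', d'} : Set A), Commute x y) :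
    FunqGL2 q (a * a' + b * c') (a * b' + b * d') (c * a' + d * c') (c * b' + d * d') := by
  refine ⟨?_, ?_, ?_, ?_, ?_, ?_⟩ <;>
  · simp only [add_mul, mul_add, sub_mul, mul_sub, smul_add, smul_sub, smul_mul_assoc,
      mul_smul_comm, smul_smul, mul_mul_mul_comm_of_mem hcomm, Set.mem_insert_iff,
      Set.mem_singleton_iff, true_or, or_true, h.straighten, h'.straighten]
    match_scalars <;> grind [q.mul_inv]

theorem qdet_mul_of_commute (h' : FunqGL2 q a' b' c' d')
    (hcomm : ∀ x ∈ ({a, b, c, d} : Set A), ∀ y ∈ ({a', b', c', d'} : Set A), Commute x y) :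
    qdet q (a * a' + b * c') (a * b' + b * d') (c * a' + d * c') (c * b' + d * d') =
      qdet q a b c d * qdet q a' b' c' d' := by
  simp only [qdet, add_mul, mul_add, sub_mul, mul_sub, smul_add, smul_sub, smul_mul_assoc,
    mul_smul_comm, smul_smul, mul_mul_mul_comm_of_mem hcomm, Set.mem_insert_iff,
    Set.mem_singleton_iff, true_or, or_true, h'.straighten]
  match_scalars <;> grind [q.mul_inv]

end

/-- the entries of the matrix tensor product `T·T′` of two commuting
quadruples satisfying the `fun_q(GL₂)` relations again satisfy them, and the
quantum determinant is multiplicative. -/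
theorem funqGL2_coproduct
    {R A : Type*} [CommRing R] [Ring A] [Algebra R A]
    (q : Rˣ) (a b c d a' b' c' d' : A)
    (h : FunqGL2 q a b c d) (h' : FunqGL2 q a' b' c' d')
    (hcomm : ∀ x ∈ ({a, b, c, d} : Set A), ∀ y ∈ ({a', b', c', d'} : Set A),
      Commute x y) :
    FunqGL2 q (a * a' + b * c') (a * b' + b * d') (c * a' + d * c') (c * b' + d * d') ∧
    (a * a' + b * c') * (c * b' + d * d') -
        (q : R) • ((a * b' + b * d') * (c * a' + d * c')) =
      (a * d - (q : R) • (b * c)) * (a' * d' - (q : R) • (b' * c')) ∧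
    (a * d - (q : R) • (b * c) = 1 → a' * d' - (q : R) • (b' * c') = 1 →
      (a * a' + b * c') * (c * b' + d * d') -
          (q : R) • ((a * b' + b * d') * (c * a' + d * c')) = 1) := by
  have hdet := qdet_mul_of_commute h' hcomm
  unfold qdet at hdet
  exact ⟨h.mul_of_commute h' hcomm, hdet, fun hdet₁ hdet₂ => by rw [hdet, hdet₁, hdet₂, one_mul]⟩
end

section
/- Let A be an associative unital ℂ-algebra, ℓ an integer with ℓ > 2, and ε ∈ ℂ a primitive ℓ-th root of unity. Suppose a, b, c, d ∈ A satisfy the fun_ε(GL₂) relations: a·b = ε·b·a, a·c = ε·c·a, b·d = ε·d·b, c·d = ε·d·c, b·c = c·b, a·d − d·a = (ε − ε⁻¹)·b·c. Then each of the elements a^ℓ, b^ℓ, c^ℓ, d^ℓ commutes with each of a, b, c, d; in particular a^ℓ, b^ℓ, c^ℓ, d^ℓ are central in the subalgebra generated by a, b, c, d. (A key step is the identity aⁿ·d = d·aⁿ + (ε − ε⁻¹)·εⁿ⁻¹·[n]_ε·b·c·aⁿ⁻¹ for n ≥ 1, together with [ℓ]_ε = 0.) -/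
/-!
A `q`-commutation `x y = ε y x` gives `xˡ y = εˡ y xˡ = y xˡ`, which handles every pair of
generators except `a, d`. For those, `z := a d - d a = (ε - ε⁻¹) b c` satisfies `a z = ε² z a`,
so telescoping gives `aˡ d - d aˡ = (∑_{i<ℓ} ε²ⁱ) z aˡ⁻¹`, and
`(ε - ε⁻¹) ∑_{i<ℓ} ε²ⁱ = ε⁻¹ (ε²ˡ - 1) = 0` (this is `[ℓ]_ε = 0`, as `∑_{i<ℓ} ε²ⁱ = εˡ⁻¹ [ℓ]_ε`).
The remaining powers are reduced to those of `a` and `b` by the symmetries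
`b ↔ c` and `(a, b, c, d) ↦ (d, b, c, a)` in the opposite algebra.
-/

open Finset MulOpposite

section QCommute

variable {R A : Type*} [CommSemiring R] [Semiring A] [Algebra R A] {x y : A} {r : R}

theorem pow_mul_eq_smul_mul_pow (h : x * y = r • (y * x)) (n : ℕ) :
    x ^ n * y = r ^ n • (y * x ^ n) := by
  induction n with
  | zero => simp
  | succ n ih =>
    rw [pow_succ, mul_assoc, h, mul_smul_comm, ← mul_assoc, ih, smul_mul_assoc, mul_assoc,
      smul_smul, ← pow_succ, ← pow_succ']

theorem mul_pow_eq_smul_pow_mul (h : x * y = r • (y * x)) (n : ℕ) :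
    x * y ^ n = r ^ n • (y ^ n * x) := by
  induction n with
  | zero => simp
  | succ n ih =>
    rw [pow_succ, ← mul_assoc, ih, smul_mul_assoc, mul_assoc, h, mul_smul_comm, smul_smul,
      ← mul_assoc, ← pow_succ, ← pow_succ]

theorem commute_pow_left_of_mul_eq_smul {n : ℕ} (h : x * y = r • (y * x)) (hr : r ^ n = 1) :
    Commute (x ^ n) y := by
  rw [Commute, SemiconjBy, pow_mul_eq_smul_mul_pow h, hr, one_smul]

theorem commute_pow_right_of_mul_eq_smul {n : ℕ} (h : x * y = r • (y * x)) (hr : r ^ n = 1) :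
    Commute x (y ^ n) := by
  rw [Commute, SemiconjBy, mul_pow_eq_smul_pow_mul h, hr, one_smul]

end QCommute

theorem pow_succ_mul_sub_mul_pow_succ {R A : Type*} [CommSemiring R] [Ring A] [Algebra R A]
    {a d : A} {t : R} (h : a * (a * d - d * a) = t • ((a * d - d * a) * a)) (n : ℕ) :
    a ^ (n + 1) * d - d * a ^ (n + 1) =
      (∑ i ∈ range (n + 1), t ^ i) • ((a * d - d * a) * a ^ n) := by
  induction n with
  | zero => simp
  | succ n ih =>
    have telescope : a ^ (n + 2) * d - d * a ^ (n + 2) =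
        a * (a ^ (n + 1) * d - d * a ^ (n + 1)) + (a * d - d * a) * a ^ (n + 1) := by
      rw [pow_succ']
      simp only [mul_sub, sub_mul, mul_assoc]
      abel
    rw [telescope, ih, mul_smul_comm, ← mul_assoc, h, geom_sum_succ (n := n + 1)]
    simp only [smul_mul_assoc, mul_assoc, ← pow_succ', add_smul, one_smul, smul_smul]
    rw [mul_comm t]

theorem sub_inv_mul_geom_sum_sq_eq_zero {K : Type*} [Field K] {ε : K} {ℓ : ℕ} (hε : ε ^ ℓ = 1) :
    (ε - ε⁻¹) * ∑ i ∈ range ℓ, (ε ^ 2) ^ i = 0 := by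
  rcases eq_or_ne ε 0 with rfl | hε0
  · simp
  calc (ε - ε⁻¹) * ∑ i ∈ range ℓ, (ε ^ 2) ^ i
      = ε⁻¹ * ((ε ^ 2 - 1) * ∑ i ∈ range ℓ, (ε ^ 2) ^ i) := by field_simp
    _ = 0 := by rw [mul_geom_sum, ← pow_mul, mul_comm 2 ℓ, pow_mul, hε]; simp

section FunQGL2

variable {K A : Type*} [Field K] [Ring A] [Algebra K A]

theorem commute_pow_of_mul_sub_mul_eq_smul {ε : K} {ℓ : ℕ} (hε : ε ^ ℓ = 1) {a b c d : A}
    (hab : a * b = ε • (b * a)) (hac : a * c = ε • (c * a))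
    (had : a * d - d * a = (ε - ε⁻¹) • (b * c)) :
    Commute (a ^ ℓ) d := by
  obtain _ | m := ℓ
  · simp
  have hbc_twist : a * (b * c) = ε ^ 2 • (b * c * a) := by
    rw [← mul_assoc, hab, smul_mul_assoc, mul_assoc, hac, mul_smul_comm, smul_smul, ← sq,
      mul_assoc]
  have hz_twist : a * (a * d - d * a) = ε ^ 2 • ((a * d - d * a) * a) := by
    rw [had, mul_smul_comm, hbc_twist, smul_mul_assoc, smul_comm]
  have hvanish := pow_succ_mul_sub_mul_pow_succ hz_twist m
  rw [had, smul_mul_assoc, smul_smul, mul_comm, sub_inv_mul_geom_sum_sq_eq_zero hε,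
    zero_smul] at hvanish
  exact sub_eq_zero.mp hvanish

structure FunQGL2Relations (q : K) (a b c d : A) : Prop where
  hab : a * b = q • (b * a)
  hac : a * c = q • (c * a)
  hbd : b * d = q • (d * b)
  hcd : c * d = q • (d * c)
  hbc : b * c = c * b
  had : a * d - d * a = (q - q⁻¹) • (b * c)

namespace FunQGL2Relations

variable {q : K} {a b c d : A}

theorem swap_b_c (h : FunQGL2Relations q a b c d) : FunQGL2Relations q a c b d :=
  ⟨h.hac, h.hab, h.hcd, h.hbd, h.hbc.symm, h.hbc ▸ h.had⟩

theorem mulOpposite (h : FunQGL2Relations q a b c d) :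
    FunQGL2Relations q (op d) (op b) (op c) (op a) where
  hab := by rw [← op_mul, ← op_mul, h.hbd, op_smul]
  hac := by rw [← op_mul, ← op_mul, h.hcd, op_smul]
  hbd := by rw [← op_mul, ← op_mul, h.hab, op_smul]
  hcd := by rw [← op_mul, ← op_mul, h.hac, op_smul]
  hbc := by rw [← op_mul, ← op_mul, h.hbc]
  had := by rw [← op_mul, ← op_mul, ← op_sub, h.had, ← op_mul, h.hbc, op_smul]

variable {ℓ : ℕ}

theorem commute_pow_a (h : FunQGL2Relations q a b c d) (hq : q ^ ℓ = 1) :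
    ∀ y ∈ ({a, b, c, d} : Set A), Commute (a ^ ℓ) y := by
  simp only [Set.mem_insert_iff, Set.mem_singleton_iff]
  rintro y (rfl | rfl | rfl | rfl)
  · exact (Commute.refl y).pow_left ℓ
  · exact commute_pow_left_of_mul_eq_smul h.hab hq
  · exact commute_pow_left_of_mul_eq_smul h.hac hq
  · exact commute_pow_of_mul_sub_mul_eq_smul hq h.hab h.hac h.had

theorem commute_pow_b (h : FunQGL2Relations q a b c d) (hq : q ^ ℓ = 1) :
    ∀ y ∈ ({a, b, c, d} : Set A), Commute (b ^ ℓ) y := by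
  simp only [Set.mem_insert_iff, Set.mem_singleton_iff]
  rintro y (rfl | rfl | rfl | rfl)
  · exact (commute_pow_right_of_mul_eq_smul h.hab hq).symm
  · exact (Commute.refl y).pow_left ℓ
  · exact Commute.pow_left h.hbc ℓ
  · exact commute_pow_left_of_mul_eq_smul h.hbd hq

theorem commute_pow_c (h : FunQGL2Relations q a b c d) (hq : q ^ ℓ = 1) :
    ∀ y ∈ ({a, b, c, d} : Set A), Commute (c ^ ℓ) y := by
  rw [Set.insert_comm b]
  exact h.swap_b_c.commute_pow_b hq

theorem commute_pow_d (h : FunQGL2Relations q a b c d) (hq : q ^ ℓ = 1) :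
    ∀ y ∈ ({a, b, c, d} : Set A), Commute (d ^ ℓ) y := by
  intro y hy
  have hy_op : op y ∈ ({op d, op b, op c, op a} : Set Aᵐᵒᵖ) := by
    simp only [Set.mem_insert_iff, Set.mem_singleton_iff, op_inj] at hy ⊢
    tauto
  simpa only [unop_pow, unop_op] using (h.mulOpposite.commute_pow_a hq _ hy_op).unop

end FunQGL2Relations

end FunQGL2

theorem funqGL2_lth_powers_central_general
    {A : Type*} [Ring A] [Algebra ℂ A]
    (ℓ : ℕ) (ε : ℂ) (hε : IsPrimitiveRoot ε ℓ)
    (a b c d : A)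
    (hab : a * b = ε • (b * a))
    (hac : a * c = ε • (c * a))
    (hbd : b * d = ε • (d * b))
    (hcd : c * d = ε • (d * c))
    (hbc : b * c = c * b)
    (had : a * d - d * a = (ε - ε⁻¹) • (b * c)) :
    ∀ x ∈ ({a, b, c, d} : Set A), ∀ y ∈ ({a, b, c, d} : Set A),
      Commute (x ^ ℓ) y := by
  have h : FunQGL2Relations ε a b c d := ⟨hab, hac, hbd, hcd, hbc, had⟩
  have hq : ε ^ ℓ = 1 := hε.pow_eq_one
  simp only [Set.mem_insert_iff, Set.mem_singleton_iff]
  rintro x (rfl | rfl | rfl | rfl)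
  exacts [h.commute_pow_a hq, h.commute_pow_b hq, h.commute_pow_c hq, h.commute_pow_d hq]

/-- at a primitive `ℓ`-th root of unity `ε` (with `ℓ > 2`), the
`ℓ`-th powers of the generators `a, b, c, d` of `fun_ε(GL₂)` commute with each
of `a, b, c, d`, hence are central in the subalgebra they generate. -/
theorem funqGL2_lth_powers_central
    {A : Type*} [Ring A] [Algebra ℂ A]
    (ℓ : ℕ) (hl : 2 < ℓ) (ε : ℂ) (hε : IsPrimitiveRoot ε ℓ)
    (a b c d : A)
    (hab : a * b = ε • (b * a))
    (hac : a * c = ε • (c * a))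
    (hbd : b * d = ε • (d * b))
    (hcd : c * d = ε • (d * c))
    (hbc : b * c = c * b)
    (had : a * d - d * a = (ε - ε⁻¹) • (b * c)) :
    ∀ x ∈ ({a, b, c, d} : Set A), ∀ y ∈ ({a, b, c, d} : Set A),
      Commute (x ^ ℓ) y :=
  funqGL2_lth_powers_central_general ℓ ε hε a b c d hab hac hbd hcd hbc had
end

section
/- Let A be an associative unital ℂ-algebra, ℓ an integer with ℓ > 2, and ε ∈ ℂ a primitive ℓ-th root of unity. Suppose a₊, a₋, w, w⁻¹ ∈ A satisfy the q-oscillator relations with q = ε. Then each of the elements a₊^ℓ, a₋^ℓ, w^ℓ, w⁻ℓ commutes with each of a₊, a₋, w, w⁻¹; that is, these elements are central in the subalgebra U_ε′(h₄) generated by a₊, a₋, w, w⁻¹. -/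
/-!
Conjugation by `w` rescales `a₊` and `a₋` by `ε` and `ε⁻¹`, so each of the pairs
`(w, a±)`, `(w⁻¹, a±)` commutes up to an `ℓ`-th root of unity, and the `ℓ`-th powers of either
member commute with the other. Moving `a₋` across `a₊^ℓ` produces, besides `ε^ℓ a₊^ℓ a₋`, the term
`(1 + ε² + ⋯ + ε^{2(ℓ-1)}) w⁻¹ a₊^{ℓ-1}`, whose coefficient vanishes because `ε² ≠ 1` is an
`ℓ`-th root of unity. The pair `(a₋^ℓ, a₊)` is the same computation in the opposite algebra.
-/

open Finset MulOpposite

section QCommutation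

variable {R A : Type*} [CommSemiring R] [Semiring A] [Algebra R A] {a b z : A} {c d : R}

theorem pow_mul_of_mul_eq_smul (h : a * b = c • (b * a)) (n : ℕ) :
    a ^ n * b = c ^ n • (b * a ^ n) := by
  induction n with
  | zero => simp
  | succ n ih =>
    rw [pow_succ, mul_assoc, h, mul_smul_comm, ← mul_assoc, ih, smul_mul_assoc, smul_smul,
      mul_assoc, ← pow_succ, ← pow_succ']

theorem mul_pow_of_mul_eq_smul (h : a * b = c • (b * a)) (n : ℕ) :
    a * b ^ n = c ^ n • (b ^ n * a) := by
  induction n with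
  | zero => simp
  | succ n ih =>
    rw [pow_succ', ← mul_assoc, h, smul_mul_assoc, mul_assoc, ih, mul_smul_comm, smul_smul,
      ← mul_assoc, ← pow_succ', ← pow_succ']

theorem commute_pow_left_of_mul_eq_smul_s5 (h : a * b = c • (b * a)) {n : ℕ} (hc : c ^ n = 1) :
    Commute (a ^ n) b := by
  rw [Commute, SemiconjBy, pow_mul_of_mul_eq_smul h, hc, one_smul]

theorem commute_pow_right_of_mul_eq_smul_s5 (h : a * b = c • (b * a)) {n : ℕ} (hc : c ^ n = 1) :
    Commute a (b ^ n) := by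
  rw [Commute, SemiconjBy, mul_pow_of_mul_eq_smul h, hc, one_smul]

theorem mul_pow_succ_of_mul_eq_smul_add (h : a * b = c • (b * a) + z) (hz : b * z = d • (z * b))
    (n : ℕ) : a * b ^ (n + 1) =
      c ^ (n + 1) • (b ^ (n + 1) * a) + (∑ i ∈ range (n + 1), (c * d) ^ i) • (z * b ^ n) := by
  induction n with
  | zero => simpa using h
  | succ n ih =>
    have hzb : b * (z * b ^ n) = d • (z * b ^ (n + 1)) := by
      rw [← mul_assoc, hz, smul_mul_assoc, mul_assoc, ← pow_succ']
    calc a * b ^ (n + 2) = (a * b) * b ^ (n + 1) := by rw [pow_succ' b (n + 1), mul_assoc]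
      _ = c • (b * (a * b ^ (n + 1))) + z * b ^ (n + 1) := by
        rw [h, add_mul, smul_mul_assoc, mul_assoc]
      _ = c ^ (n + 2) • (b ^ (n + 2) * a)
          + ((c * d) * ∑ i ∈ range (n + 1), (c * d) ^ i + 1) • (z * b ^ (n + 1)) := by
        rw [ih, mul_add, mul_smul_comm, mul_smul_comm, hzb, ← mul_assoc, ← pow_succ' b (n + 1)]
        module
      _ = _ := by rw [← geom_sum_succ]
theorem mul_eq_smul_mul_of_conj_eq_smul {w w' : A} (hw : w' * w = 1) (h : w * a * w' = c • a) :
    w * a = c • (a * w) := by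
  rw [← smul_mul_assoc, ← h, mul_assoc _ w', hw, mul_one]

theorem mul_eq_smul_mul_of_conj_eq_smul' {w w' : A} (hw : w' * w = 1) (h : w * a * w' = c • a) :
    a * w' = c • (w' * a) := by
  rw [← mul_smul_comm, ← h, ← mul_assoc, ← mul_assoc, hw, one_mul]

end QCommutation

section QCommutationAdd

variable {R A : Type*} [CommRing R] [NoZeroDivisors R] [Semiring A] [Algebra R A]
  {a b z : A} {c d : R} {n : ℕ}

theorem commute_pow_right_of_mul_eq_smul_add (h : a * b = c • (b * a) + z)
    (hz : b * z = d • (z * b)) (hc : c ^ n = 1) (hcd : (c * d) ^ n = 1) (hcd₁ : c * d ≠ 1) :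
    Commute a (b ^ n) := by
  obtain _ | n := n
  · simp
  have hsum : ∑ i ∈ range (n + 1), (c * d) ^ i = 0 := by
    have := geom_sum_mul (c * d) (n + 1)
    rw [hcd, sub_self] at this
    exact (mul_eq_zero.1 this).resolve_right (sub_ne_zero.2 hcd₁)
  rw [Commute, SemiconjBy, mul_pow_succ_of_mul_eq_smul_add h hz, hc, hsum, one_smul, zero_smul,
    add_zero]

theorem commute_pow_left_of_mul_eq_smul_add (h : a * b = c • (b * a) + z)
    (hz : z * a = d • (a * z)) (hc : c ^ n = 1) (hcd : (c * d) ^ n = 1) (hcd₁ : c * d ≠ 1) :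
    Commute (a ^ n) b := by
  have h' : op b * op a = c • (op a * op b) + op z := by
    rw [← op_mul, ← op_mul, ← op_smul, ← op_add, h]
  have hz' : op a * op z = d • (op z * op a) := by
    rw [← op_mul, ← op_mul, ← op_smul, hz]
  simpa [← op_pow] using (commute_pow_right_of_mul_eq_smul_add h' hz' hc hcd hcd₁).symm.unop

end QCommutationAdd

theorem q_oscillator_lth_powers_central_general
    {A : Type*} [Ring A] [Algebra ℂ A]
    (ℓ : ℕ) (hl : 2 < ℓ) (ε : ℂ) (hε : IsPrimitiveRoot ε ℓ)
    (ap am w winv : A)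
    (hw1 : w * winv = 1) (hw2 : winv * w = 1)
    (hwp : w * ap * winv = ε • ap)
    (hwm : w * am * winv = ε⁻¹ • am)
    (hq : am * ap - ε • (ap * am) = winv) :
    ∀ x ∈ ({ap, am, w, winv} : Set A), ∀ y ∈ ({ap, am, w, winv} : Set A),
      Commute (x ^ ℓ) y := by
  have hε0 : ε ≠ 0 := hε.ne_zero (by omega)
  have hεℓ : ε ^ ℓ = 1 := hε.pow_eq_one
  have hε_invℓ : ε⁻¹ ^ ℓ = 1 := by rw [inv_pow, hεℓ, inv_one]
  have hεεℓ : (ε * ε) ^ ℓ = 1 := by rw [mul_pow, hεℓ, one_mul]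
  have hεε : ε * ε ≠ 1 := by rw [← sq]; exact hε.pow_ne_one_of_pos_of_lt two_ne_zero hl
  have hw_ap := mul_eq_smul_mul_of_conj_eq_smul hw2 hwp
  have hap_winv := mul_eq_smul_mul_of_conj_eq_smul' hw2 hwp
  have hw_am := mul_eq_smul_mul_of_conj_eq_smul hw2 hwm
  have ham_winv := mul_eq_smul_mul_of_conj_eq_smul' hw2 hwm
  have hwinv_am : winv * am = ε • (am * winv) := ((eq_inv_smul_iff₀ hε0).1 ham_winv).symm
  have ham_ap : am * ap = ε • (ap * am) + winv := eq_add_of_sub_eq' hq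
  have := (commute_pow_right_of_mul_eq_smul_add ham_ap hap_winv hεℓ hεεℓ hεε).symm
  have := commute_pow_left_of_mul_eq_smul_add ham_ap hwinv_am hεℓ hεεℓ hεε
  have := commute_pow_left_of_mul_eq_smul_s5 hw_ap hεℓ
  have := (commute_pow_right_of_mul_eq_smul_s5 hw_ap hεℓ).symm
  have := commute_pow_left_of_mul_eq_smul_s5 hap_winv hεℓ
  have := (commute_pow_right_of_mul_eq_smul_s5 hap_winv hεℓ).symm
  have := commute_pow_left_of_mul_eq_smul_s5 hw_am hε_invℓ
  have := (commute_pow_right_of_mul_eq_smul_s5 hw_am hε_invℓ).symm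
  have := commute_pow_left_of_mul_eq_smul_s5 ham_winv hε_invℓ
  have := (commute_pow_right_of_mul_eq_smul_s5 ham_winv hε_invℓ).symm
  have hw_winv : Commute w winv := hw1.trans hw2.symm
  have := hw_winv.pow_left ℓ
  have := hw_winv.symm.pow_left ℓ
  intro x hx y hy
  simp only [Set.mem_insert_iff, Set.mem_singleton_iff] at hx hy
  rcases hx with rfl | rfl | rfl | rfl <;> rcases hy with rfl | rfl | rfl | rfl <;>
    first | exact (Commute.refl _).pow_left ℓ | assumption

/-- at a primitive `ℓ`-th root of unity `ε` (with `ℓ > 2`), the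
elements `a₊^ℓ, a₋^ℓ, w^ℓ, w⁻ℓ` of the `q`-oscillator algebra `U_ε′(h₄)` commute
with each of `a₊, a₋, w, w⁻¹`. -/
theorem q_oscillator_lth_powers_central
    {A : Type*} [Ring A] [Algebra ℂ A]
    (ℓ : ℕ) (hl : 2 < ℓ) (ε : ℂ) (hε : IsPrimitiveRoot ε ℓ)
    (ap am w winv : A)
    (hw1 : w * winv = 1) (hw2 : winv * w = 1)
    (hwp : w * ap * winv = ε • ap)
    (hwm : w * am * winv = ε⁻¹ • am)
    (hq : am * ap - ε • (ap * am) = winv)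
    (hq' : am * ap - ε⁻¹ • (ap * am) = w) :
    ∀ x ∈ ({ap, am, w, winv} : Set A), ∀ y ∈ ({ap, am, w, winv} : Set A),
      Commute (x ^ ℓ) y :=
  q_oscillator_lth_powers_central_general ℓ hl ε hε ap am w winv hw1 hw2 hwp hwm hq
end

section
/- Let A be an associative unital ℂ-algebra, ℓ an even integer with ℓ ≥ 4, set ℓ′ = ℓ/2, and let ε ∈ ℂ be a primitive ℓ-th root of unity. Suppose a₊, a₋, w, w⁻¹ ∈ A satisfy the q-oscillator relations with q = ε. Then a₊^{ℓ′} anticommutes with a₋, w and w⁻¹ (that is, a₋·a₊^{ℓ′} = −a₊^{ℓ′}·a₋, and w·a₊^{ℓ′} = −a₊^{ℓ′}·w, w⁻¹·a₊^{ℓ′} = −a₊^{ℓ′}·w⁻¹), and similarly a₋^{ℓ′} anticommutes with a₊, w and w⁻¹. (This is the obstruction showing there is no ℓ′-dimensional cyclic representation of U_ε′(h₄) at an even root of unity.) -/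
lemma qosc_pow_comm {A : Type*} [Ring A] [Algebra ℂ A] (ε : ℂ) (x y : A)
    (h : x * y = ε • (y * x)) : ∀ n : ℕ, x * y ^ n = ε ^ n • (y ^ n * x) := by
  intro n
  induction n with
  | zero => simp
  | succ n ih =>
    rw [pow_succ, pow_succ, ← mul_assoc, ih, smul_mul_assoc, mul_assoc, h,
      mul_smul_comm, smul_smul, ← mul_assoc]

lemma qosc_main {A : Type*} [Ring A] [Algebra ℂ A] (ε δ : ℂ) (hε0 : ε ≠ 0) (x y z : A)
    (hxy : y * x = ε • (x * y) + δ • z)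
    (hz : z * x = ε⁻¹ • (x * z)) :
    ∀ n : ℕ, y * x ^ (n + 1) = ε ^ (n + 1) • (x ^ (n + 1) * y) +
      (δ * (ε ^ n * ∑ k ∈ Finset.range (n + 1), ((ε⁻¹) ^ 2) ^ k)) • (x ^ n * z) := by
  intro n
  induction n with
  | zero => simpa using hxy
  | succ n ih =>
    have step : y * x ^ (n + 2) = (y * x ^ (n + 1)) * x := by
      rw [mul_assoc, ← pow_succ]
    rw [step, ih, add_mul, smul_mul_assoc, smul_mul_assoc, mul_assoc, mul_assoc, hxy, hz]
    rw [mul_add, smul_add, mul_smul_comm, mul_smul_comm, mul_smul_comm, smul_smul,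
      smul_smul, smul_smul, ← mul_assoc, ← mul_assoc, ← pow_succ, ← pow_succ]
    rw [show x ^ n * (x * z) = x ^ (n+1) * z from by rw [← mul_assoc, ← pow_succ]]
    rw [add_assoc, ← add_smul]
    have key : ε ^ (n+1) * δ + (δ * ε ^ n * ∑ k ∈ Finset.range (n + 1), ((ε⁻¹) ^ 2) ^ k) * ε⁻¹
        = δ * (ε ^ (n+1) * ∑ k ∈ Finset.range (n + 2), ((ε⁻¹) ^ 2) ^ k) := by
      conv_rhs => rw [show (n+2) = (n+1)+1 from rfl, Finset.sum_range_succ']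
      simp only [pow_zero, pow_succ']
      rw [← Finset.mul_sum]
      field_simp
      ring
    rw [key]
lemma qosc_conj {A : Type*} [Ring A] [Algebra ℂ A] (c : ℂ) (hc : c ≠ 0) (w winv x : A)
    (hw1 : w * winv = 1) (hw2 : winv * w = 1) (h : w * x * winv = c • x) :
    w * x = c • (x * w) ∧ winv * x = c⁻¹ • (x * winv) := by
  have e1 : w * x * winv * w = w * x := by rw [mul_assoc, hw2, mul_one]
  have h1 : w * x = c • (x * w) := by rw [← e1, h, smul_mul_assoc]
  refine ⟨h1, ?_⟩
  have e2 : winv * (w * x * winv) = x * winv := by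
    rw [← mul_assoc, ← mul_assoc, hw2, one_mul]
  have h2 : x * winv = c • (winv * x) := by rw [← e2, h, mul_smul_comm]
  rw [h2, smul_smul, inv_mul_cancel₀ hc, one_smul]

/-- at an even primitive `ℓ`-th root of unity (`ℓ ≥ 4`, `ℓ′ = ℓ/2`),
the `ℓ′`-th power of `a₊` anticommutes with `a₋, w, w⁻¹`, and the `ℓ′`-th power
of `a₋` anticommutes with `a₊, w, w⁻¹`. -/
theorem q_oscillator_even_root_anticommute
    {A : Type*} [Ring A] [Algebra ℂ A]
    (ℓ ℓ' : ℕ) (hl : 4 ≤ ℓ) (hl' : 2 * ℓ' = ℓ)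
    (ε : ℂ) (hε : IsPrimitiveRoot ε ℓ)
    (ap am w winv : A)
    (hw1 : w * winv = 1) (hw2 : winv * w = 1)
    (hwp : w * ap * winv = ε • ap)
    (hwm : w * am * winv = ε⁻¹ • am)
    (hq : am * ap - ε • (ap * am) = winv)
    (hq' : am * ap - ε⁻¹ • (ap * am) = w) :
    am * ap ^ ℓ' = -(ap ^ ℓ' * am) ∧
    w * ap ^ ℓ' = -(ap ^ ℓ' * w) ∧
    winv * ap ^ ℓ' = -(ap ^ ℓ' * winv) ∧
    ap * am ^ ℓ' = -(am ^ ℓ' * ap) ∧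
    w * am ^ ℓ' = -(am ^ ℓ' * w) ∧
    winv * am ^ ℓ' = -(am ^ ℓ' * winv) := by
  have hε0 : ε ≠ 0 := hε.ne_zero (by omega)
  have hε0' : (ε⁻¹ : ℂ) ≠ 0 := inv_ne_zero hε0
  have hℓ'2 : 2 ≤ ℓ' := by omega
  -- ε ^ ℓ' = -1
  have hsq : (ε ^ ℓ') ^ 2 = 1 := by
    rw [← pow_mul, show ℓ' * 2 = ℓ by omega]; exact hε.pow_eq_one
  have hne1 : ε ^ ℓ' ≠ 1 := hε.pow_ne_one_of_pos_of_lt (by omega) (by omega)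
  have hhalf : ε ^ ℓ' = -1 := by
    have hfac : (ε ^ ℓ' - 1) * (ε ^ ℓ' + 1) = 0 := by linear_combination hsq
    rcases mul_eq_zero.mp hfac with h | h
    · exact absurd (sub_eq_zero.mp h) hne1
    · exact eq_neg_of_add_eq_zero_left h
  have hinv : (ε⁻¹ : ℂ) ^ ℓ' = -1 := by
    rw [inv_pow, hhalf]; norm_num
  -- basic commutation relations
  obtain ⟨hA, hB⟩ := qosc_conj ε hε0 w winv ap hw1 hw2 hwp
  obtain ⟨hC, hD0⟩ := qosc_conj ε⁻¹ hε0' w winv am hw1 hw2 hwm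
  have hD : winv * am = ε • (am * winv) := by rwa [inv_inv] at hD0
  -- geometric sum vanishes
  have ht1 : ((ε⁻¹ : ℂ) ^ 2) ≠ 1 := by
    rw [inv_pow, Ne, inv_eq_one]
    exact hε.pow_ne_one_of_pos_of_lt (by omega) (by omega)
  have htl : (((ε⁻¹ : ℂ) ^ 2)) ^ ℓ' = 1 := by
    rw [← pow_mul, show 2 * ℓ' = ℓ from hl', inv_pow, hε.pow_eq_one, inv_one]
  have hs : ∑ k ∈ Finset.range ℓ', (((ε⁻¹ : ℂ)) ^ 2) ^ k = 0 := by
    rw [geom_sum_eq ht1, htl, sub_self, zero_div]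
  -- a₋ vs a₊^ℓ'
  have hxy : am * ap = ε • (ap * am) + (1 : ℂ) • winv := by
    rw [one_smul, add_comm]; exact sub_eq_iff_eq_add.mp hq
  have hmain := qosc_main ε 1 hε0 ap am winv hxy hB (ℓ' - 1)
  rw [show ℓ' - 1 + 1 = ℓ' by omega] at hmain
  rw [hs] at hmain
  -- a₊ vs a₋^ℓ'
  have h5 : (ε⁻¹ : ℂ) • (ap * am) = am * ap - w :=
    eq_sub_iff_add_eq.mpr (sub_eq_iff_eq_add'.mp hq').symm
  have hxy' : ap * am = ε • (am * ap) + (-ε) • w := by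
    have h7 : ap * am = ε • (ε⁻¹ • (ap * am)) := by
      rw [smul_smul, mul_inv_cancel₀ hε0, one_smul]
    rw [h7, h5, smul_sub, neg_smul, ← sub_eq_add_neg]
  have hmain' := qosc_main ε (-ε) hε0 am ap w hxy' hC (ℓ' - 1)
  rw [show ℓ' - 1 + 1 = ℓ' by omega] at hmain'
  rw [hs] at hmain'
  refine ⟨by simpa [hhalf] using hmain,
    by simpa [hhalf] using qosc_pow_comm ε w ap hA ℓ',
    by simpa [hinv] using qosc_pow_comm ε⁻¹ winv ap hB ℓ',
    by simpa [hhalf] using hmain',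
    by simpa [hinv] using qosc_pow_comm ε⁻¹ w am hC ℓ',
    by simpa [hhalf] using qosc_pow_comm ε winv am hD ℓ'⟩
end

section
/- Let ℓ be an odd integer with ℓ > 2, let ε ∈ ℂ be a primitive ℓ-th root of unity, and let (λ, μ) ∈ ℂ × ℂ with λ·μ = 0. Let V = ℂ^{ℓ} with basis {vₙ : 0 ≤ n ≤ ℓ−1} and define ℂ-linear endomorphisms a₊, a₋, w of V by: a₊·vₙ = v_{n+1} for 0 ≤ n ≤ ℓ−2 and a₊·v_{ℓ−1} = λ·v₀; a₋·vₙ = [n]_ε·v_{n−1} for 1 ≤ n ≤ ℓ−1 and a₋·v₀ = μ·v_{ℓ−1}; w·vₙ = εⁿ·vₙ. Then: (1) w is invertible and a₊, a₋, w, w⁻¹ satisfy the q-oscillator relations with q = ε; (2) V is irreducible, i.e. every ℂ-subspace of V invariant under a₊, a₋ and w is {0} or V; (3) a₊^ℓ = λ·id_V and a₋^ℓ = μ·[ℓ−1]_ε!·id_V, where [ℓ−1]_ε! = Π_{m=1}^{ℓ−1}[m]_ε; in particular if exactly one of λ, μ is nonzero the module is semicyclic, and if λ = μ = 0 it is nilpotent.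 -/
noncomputable def qIntC (q : ℂ) (n : ℕ) : ℂ :=
  ∑ i ∈ Finset.range n, q ^ ((n : ℤ) - 1 - 2 * (i : ℤ))

lemma qIntC_succ_left {ε : ℂ} (hε0 : ε ≠ 0) (n : ℕ) :
    qIntC ε (n + 1) = ε ^ (-(n : ℤ)) + ε * qIntC ε n := by
  unfold qIntC
  rw [Finset.sum_range_succ, Finset.mul_sum, add_comm]
  congr 1
  · congr 1; push_cast; ring
  · apply Finset.sum_congr rfl; intro i _
    rw [show (((n+1 : ℕ) : ℤ) - 1 - 2 * (i:ℤ)) = 1 + ((n : ℤ) - 1 - 2 * i) by push_cast; ring,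
      zpow_add₀ hε0, zpow_one]

lemma qIntC_succ_right {ε : ℂ} (hε0 : ε ≠ 0) (n : ℕ) :
    qIntC ε (n + 1) = ε ^ (n : ℤ) + ε⁻¹ * qIntC ε n := by
  unfold qIntC
  rw [Finset.sum_range_succ', Finset.mul_sum]
  rw [add_comm]
  congr 1
  · congr 1; push_cast; ring
  · apply Finset.sum_congr rfl; intro i _
    rw [show (((n+1 : ℕ) : ℤ) - 1 - 2 * ((i+1 : ℕ):ℤ)) = (-1) + ((n : ℤ) - 1 - 2 * i) by push_cast; ring,
      zpow_add₀ hε0, zpow_neg_one]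

lemma qIntC_closed {ε : ℂ} (hε0 : ε ≠ 0) (n : ℕ) :
    (ε - ε⁻¹) * qIntC ε n = ε ^ (n : ℤ) - ε ^ (-(n : ℤ)) := by
  linear_combination (qIntC_succ_right hε0 n) - (qIntC_succ_left hε0 n)

/-- the `ℓ`-dimensional modules `V_{λ,μ}` (with `λ·μ = 0`) of the
`q`-oscillator algebra at an odd primitive `ℓ`-th root of unity: the operators
satisfy the `q`-oscillator relations, the module is irreducible, and
`a₊^ℓ = λ·id`, `a₋^ℓ = μ·[ℓ-1]_ε!·id`. -/
theorem q_oscillator_odd_root_semicyclic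
    (ℓ : ℕ) (hl : 2 < ℓ) (hodd : Odd ℓ)
    (ε : ℂ) (hε : IsPrimitiveRoot ε ℓ)
    (lam mu : ℂ) (hlm : lam * mu = 0)
    (ap am w : Module.End ℂ (Fin ℓ → ℂ))
    (v : Fin ℓ → Fin ℓ → ℂ) (hv : ∀ n, v n = Pi.single n 1)
    (hap1 : ∀ (n : ℕ) (h : n + 1 < ℓ), ap (v ⟨n, by omega⟩) = v ⟨n + 1, h⟩)
    (hap2 : ap (v ⟨ℓ - 1, by omega⟩) = lam • v ⟨0, by omega⟩)
    (ham1 : ∀ (n : ℕ) (h : n + 1 < ℓ),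
      am (v ⟨n + 1, h⟩) = qIntC ε (n + 1) • v ⟨n, by omega⟩)
    (ham2 : am (v ⟨0, by omega⟩) = mu • v ⟨ℓ - 1, by omega⟩)
    (hw : ∀ n : Fin ℓ, w (v n) = ε ^ (n : ℕ) • v n) :
    (∃ winv : Module.End ℂ (Fin ℓ → ℂ),
      w * winv = 1 ∧ winv * w = 1 ∧
      w * ap * winv = ε • ap ∧
      w * am * winv = ε⁻¹ • am ∧
      am * ap - ε • (ap * am) = winv ∧
      am * ap - ε⁻¹ • (ap * am) = w) ∧
    (∀ p : Submodule ℂ (Fin ℓ → ℂ),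
      (∀ x ∈ p, ap x ∈ p) → (∀ x ∈ p, am x ∈ p) → (∀ x ∈ p, w x ∈ p) →
      p = ⊥ ∨ p = ⊤) ∧
    ap ^ ℓ = lam • (1 : Module.End ℂ (Fin ℓ → ℂ)) ∧
    am ^ ℓ = (mu * ∏ m ∈ Finset.range (ℓ - 1), qIntC ε (m + 1))
        • (1 : Module.End ℂ (Fin ℓ → ℂ)) := by
  have hε0 : ε ≠ 0 := hε.ne_zero (by omega)
  have hεl : ε ^ ℓ = 1 := hε.pow_eq_one
  have hεpow1 : ε ^ (ℓ - 1) = ε⁻¹ := by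
    have h : ε ^ (ℓ - 1) * ε = 1 := by
      rw [← pow_succ, show ℓ - 1 + 1 = ℓ by omega]; exact hεl
    exact eq_inv_of_mul_eq_one_left h
  have hεpow2 : ε⁻¹ ^ (ℓ - 1) = ε := by rw [inv_pow, hεpow1, inv_inv]
  have hε2 : ε ^ 2 ≠ 1 := by
    intro h
    have h2 := Nat.le_of_dvd (by norm_num) ((hε.pow_eq_one_iff_dvd 2).mp h)
    omega
  have hsub : ε - ε⁻¹ ≠ 0 := by
    refine sub_ne_zero.mpr fun h => hε2 ?_
    rw [sq]; nth_rewrite 2 [h]; exact mul_inv_cancel₀ hε0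
  have hq0 : qIntC ε 0 = 0 := by simp [qIntC]
  have hrec1 : ∀ n : ℕ, qIntC ε (n + 1) - ε * qIntC ε n = ε⁻¹ ^ n := by
    intro n
    rw [qIntC_succ_left hε0, zpow_neg, zpow_natCast, ← inv_pow]; ring
  have hrec2 : ∀ n : ℕ, qIntC ε (n + 1) - ε⁻¹ * qIntC ε n = ε ^ n := by
    intro n
    rw [qIntC_succ_right hε0, zpow_natCast]; ring
  have hq1 : qIntC ε 1 = 1 := by
    have := hrec1 0; rw [hq0] at this; simpa using this
  have hqne : ∀ n : ℕ, 0 < n → n < ℓ → qIntC ε n ≠ 0 := by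
    intro n hn0 hnl h
    have hc := qIntC_closed hε0 n
    rw [h, mul_zero] at hc
    have heq : ε ^ (n : ℤ) = ε ^ (-(n : ℤ)) := sub_eq_zero.mp hc.symm
    have h1 : ε ^ (n : ℤ) * ε ^ (n : ℤ) = 1 := by
      nth_rewrite 2 [heq]
      rw [← zpow_add₀ hε0]; simp
    have h2n : ε ^ (2 * n) = 1 := by
      rw [two_mul, pow_add, ← zpow_natCast ε n]; exact h1
    have hdvd : ℓ ∣ 2 * n := (hε.pow_eq_one_iff_dvd _).mp h2n
    have hcop : Nat.Coprime ℓ 2 := Nat.coprime_two_right.mpr hodd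
    have : ℓ ∣ n := hcop.dvd_of_dvd_mul_left hdvd
    exact absurd (Nat.le_of_dvd hn0 this) (by omega)
  have hqlast : qIntC ε (ℓ - 1) = -1 := by
    have hc := qIntC_closed hε0 (ℓ - 1)
    have e1 : ε ^ (((ℓ - 1 : ℕ)) : ℤ) = ε⁻¹ := by rw [zpow_natCast]; exact hεpow1
    have e2 : ε ^ (-((ℓ - 1 : ℕ) : ℤ)) = ε := by rw [zpow_neg, e1, inv_inv]
    rw [e1, e2] at hc
    apply mul_left_cancel₀ hsub
    rw [hc]; ring
  have hml : mu * lam = 0 := by rw [mul_comm]; exact hlm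
  -- basis
  have hB : ∀ i : Fin ℓ, (Pi.basisFun ℂ (Fin ℓ)) i = v i := by
    intro i; rw [hv]; simp
  have hext : ∀ {f g : Module.End ℂ (Fin ℓ → ℂ)},
      (∀ i : Fin ℓ, f (v i) = g (v i)) → f = g := by
    intro f g h
    exact Module.Basis.ext (Pi.basisFun ℂ (Fin ℓ)) fun i => by rw [hB i]; exact h i
  have hveq : ∀ (a b : ℕ) (ha : a < ℓ) (hb : b < ℓ), a = b →
      v ⟨a, ha⟩ = v ⟨b, hb⟩ := by
    intro a b ha hb h; subst h; rfl
  refine ⟨?_, ?_, ?_, ?_⟩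
  · -- relations
    set winv : Module.End ℂ (Fin ℓ → ℂ) :=
      LinearMap.pi (fun j : Fin ℓ =>
        (ε⁻¹ ^ (j : ℕ)) • (LinearMap.proj j : (Fin ℓ → ℂ) →ₗ[ℂ] ℂ)) with hwdef
    have hwinv : ∀ i : Fin ℓ, winv (v i) = ε⁻¹ ^ (i : ℕ) • v i := by
      intro i; rw [hv]; funext j
      by_cases h : j = i
      · subst h; simp [hwdef]
      · simp [hwdef, Pi.single_apply, h]
    refine ⟨winv, ?_, ?_, ?_, ?_, ?_, ?_⟩
    · apply hext; intro i
      rw [Module.End.mul_apply, hwinv, map_smul, hw, smul_smul, ← mul_pow,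
        inv_mul_cancel₀ hε0, one_pow, one_smul]
      rfl
    · apply hext; intro i
      rw [Module.End.mul_apply, hw, map_smul, hwinv, smul_smul, ← mul_pow,
        mul_inv_cancel₀ hε0, one_pow, one_smul]
      rfl
    · apply hext; rintro ⟨n, hn⟩
      rw [Module.End.mul_apply, Module.End.mul_apply, hwinv, map_smul, map_smul,
        LinearMap.smul_apply]
      by_cases h1 : n + 1 < ℓ
      · rw [hap1 n h1, hw ⟨n + 1, h1⟩, smul_smul]
        congr 1
        rw [inv_pow, pow_succ]
        field_simp
      · obtain rfl : n = ℓ - 1 := by omega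
        rw [hap2, map_smul, hw ⟨0, by omega⟩, hεpow2]
        simp only [smul_smul]
        congr 1
        simp
    · apply hext; rintro ⟨n, hn⟩
      rw [Module.End.mul_apply, Module.End.mul_apply, hwinv, map_smul, map_smul,
        LinearMap.smul_apply]
      rcases n with _ | m
      · rw [ham2, map_smul, hw ⟨ℓ - 1, by omega⟩]
        simp only [smul_smul]
        congr 1
        simp only [pow_zero, one_mul, Fin.val_mk]
        rw [hεpow1]; ring
      · have hm : m + 1 < ℓ := hn
        rw [ham1 m hm, map_smul, hw ⟨m, by omega⟩]
        simp only [smul_smul]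
        congr 1
        rw [inv_pow, pow_succ]
        field_simp
    · apply hext; rintro ⟨n, hn⟩
      rw [LinearMap.sub_apply, Module.End.mul_apply, LinearMap.smul_apply,
        Module.End.mul_apply, hwinv]
      by_cases h1 : n + 1 < ℓ
      · rw [hap1 n h1, ham1 n h1]
        rcases n with _ | m
        · rw [ham2, map_smul, hap2, smul_smul, smul_smul, mul_assoc, hml, mul_zero, zero_smul,
            sub_zero, hq1]
          simp
        · have hm : m + 1 < ℓ := by omega
          rw [ham1 m hm, map_smul, hap1 m hm, smul_smul, ← sub_smul, hrec1 (m + 1)]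
      · obtain rfl : n = ℓ - 1 := by omega
        have h2 : ℓ - 2 + 1 < ℓ := by omega
        rw [hap2, map_smul, ham2, smul_smul,
          hveq (ℓ - 1) (ℓ - 2 + 1) hn h2 (by omega), ham1 (ℓ - 2) h2, map_smul,
          hap1 (ℓ - 2) h2, hlm, zero_smul, zero_sub, smul_smul,
          hveq (ℓ - 2 + 1) (ℓ - 1) h2 hn (by omega),
          show ℓ - 2 + 1 = ℓ - 1 by omega, hqlast, hεpow2]
        rw [← neg_smul]
        norm_num
    · apply hext; rintro ⟨n, hn⟩
      rw [LinearMap.sub_apply, Module.End.mul_apply, LinearMap.smul_apply,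
        Module.End.mul_apply, hw]
      by_cases h1 : n + 1 < ℓ
      · rw [hap1 n h1, ham1 n h1]
        rcases n with _ | m
        · rw [ham2, map_smul, hap2, smul_smul, smul_smul, mul_assoc, hml, mul_zero, zero_smul,
            sub_zero, hq1]
          simp
        · have hm : m + 1 < ℓ := by omega
          rw [ham1 m hm, map_smul, hap1 m hm, smul_smul, ← sub_smul, hrec2 (m + 1)]
      · obtain rfl : n = ℓ - 1 := by omega
        have h2 : ℓ - 2 + 1 < ℓ := by omega
        rw [hap2, map_smul, ham2, smul_smul,
          hveq (ℓ - 1) (ℓ - 2 + 1) hn h2 (by omega), ham1 (ℓ - 2) h2, map_smul,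
          hap1 (ℓ - 2) h2, hlm, zero_smul, zero_sub, smul_smul,
          hveq (ℓ - 2 + 1) (ℓ - 1) h2 hn (by omega),
          show ℓ - 2 + 1 = ℓ - 1 by omega, hqlast, hεpow1]
        rw [← neg_smul]
        norm_num
  · -- irreducibility
    intro p hpap hpam hpw
    by_cases hbot : p = ⊥
    · exact Or.inl hbot
    right
    have hv0 : ∀ i : Fin ℓ, v i ≠ 0 := by
      intro i h
      rw [hv] at h
      have := congrFun h i
      simp at this
    have hsingle : ∀ (j : Fin ℓ) (c : ℂ), c • v j = Pi.single j c := by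
      intro j c
      rw [hv]; funext t
      by_cases h : t = j
      · subst h; simp
      · simp [Pi.single_apply, h]
    have hxsum : ∀ y : Fin ℓ → ℂ, y = ∑ j, y j • v j := by
      intro y
      rw [Finset.sum_congr rfl fun j _ => hsingle j (y j), Finset.univ_sum_single]
    obtain ⟨x, hxp, hx0⟩ := Submodule.exists_mem_ne_zero_of_ne_bot hbot
    obtain ⟨k, hxk⟩ := Function.ne_iff.mp hx0
    simp only [Pi.zero_apply] at hxk
    have hwp : ∀ (m : ℕ), ∀ y ∈ p, (w ^ m) y ∈ p := by
      intro m
      induction m with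
      | zero => intro y hy; simpa using hy
      | succ m ih =>
        intro y hy
        rw [pow_succ, Module.End.mul_apply]
        exact ih (w y) (hpw y hy)
    have hpoly : ∀ (P : Polynomial ℂ), ∀ y ∈ p, (Polynomial.aeval w P) y ∈ p := by
      intro P
      induction P using Polynomial.induction_on' with
      | add f g hf hg =>
        intro y hy
        rw [map_add, LinearMap.add_apply]
        exact p.add_mem (hf y hy) (hg y hy)
      | monomial m a =>
        intro y hy
        rw [Polynomial.aeval_monomial, Module.End.mul_apply, Module.algebraMap_end_apply]
        exact p.smul_mem a (hwp m y hy)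
    have heig : ∀ (P : Polynomial ℂ) (i : Fin ℓ),
        (Polynomial.aeval w P) (v i) = P.eval (ε ^ (i : ℕ)) • v i := by
      intro P i
      exact Module.End.aeval_apply_of_hasEigenvector
        ⟨Module.End.mem_eigenspace_iff.mpr (hw i), hv0 i⟩
    set P : Polynomial ℂ :=
      ∏ m ∈ Finset.univ.erase k, (Polynomial.X - Polynomial.C (ε ^ (m : ℕ))) with hP
    have hPeval : ∀ j : Fin ℓ, P.eval (ε ^ (j : ℕ)) =
        ∏ m ∈ Finset.univ.erase k, (ε ^ (j : ℕ) - ε ^ (m : ℕ)) := by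
      intro j
      rw [hP, Polynomial.eval_prod]
      apply Finset.prod_congr rfl
      intro m _
      simp
    have hc0 : P.eval (ε ^ (k : ℕ)) ≠ 0 := by
      rw [hPeval]
      apply Finset.prod_ne_zero_iff.mpr
      intro m hm
      refine sub_ne_zero.mpr fun h => ?_
      have hkm := hε.pow_inj k.2 m.2 h
      exact (Finset.mem_erase.mp hm).1 (Fin.ext hkm.symm)
    have hPx : (Polynomial.aeval w P) x = (x k * P.eval (ε ^ (k : ℕ))) • v k := by
      conv_lhs => rw [hxsum x]
      rw [map_sum, Finset.sum_eq_single k]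
      · rw [map_smul, heig, smul_smul]
      · intro j _ hj
        rw [map_smul, heig, hPeval j,
          Finset.prod_eq_zero (Finset.mem_erase.mpr ⟨hj, Finset.mem_univ j⟩)
            (sub_self (ε ^ (j : ℕ))), zero_smul, smul_zero]
      · intro h
        exact absurd (Finset.mem_univ k) h
    have hvk : v k ∈ p := by
      have h1 := hpoly P x hxp
      rw [hPx] at h1
      have h2 := p.smul_mem (x k * P.eval (ε ^ (k : ℕ)))⁻¹ h1
      rw [smul_smul, inv_mul_cancel₀ (mul_ne_zero hxk hc0), one_smul] at h2
      exact h2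
    have hdown : ∀ (n : ℕ) (h : n < ℓ), v ⟨n, h⟩ ∈ p → v ⟨0, by omega⟩ ∈ p := by
      intro n
      induction n with
      | zero => intro h hp0; exact hp0
      | succ n ih =>
        intro h hmem
        have h1 := hpam _ hmem
        rw [ham1 n h] at h1
        have h2 := p.smul_mem (qIntC ε (n + 1))⁻¹ h1
        rw [smul_smul, inv_mul_cancel₀ (hqne (n + 1) (by omega) (by omega)),
          one_smul] at h2
        exact ih (by omega) h2
    have hv0p : v ⟨0, by omega⟩ ∈ p := hdown k.1 k.2 hvk
    have hup : ∀ (n : ℕ) (h : n < ℓ), v ⟨n, h⟩ ∈ p := by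
      intro n
      induction n with
      | zero => intro h; exact hv0p
      | succ n ih =>
        intro h
        have h1 := hpap _ (ih (by omega))
        rw [hap1 n h] at h1
        exact h1
    rw [Submodule.eq_top_iff']
    intro y
    rw [hxsum y]
    exact Submodule.sum_mem p fun j _ => p.smul_mem _ (hup j.1 j.2)
  · -- ap ^ ℓ = lam • 1
    have hpowap : ∀ (k n : ℕ) (h : n + k ≤ ℓ - 1),
        (ap ^ k) (v ⟨n, by omega⟩) = v ⟨n + k, by omega⟩ := by
      intro k
      induction k with
      | zero => intro n h; simp
      | succ k ih =>
        intro n h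
        rw [pow_succ, Module.End.mul_apply, hap1 n (by omega), ih (n + 1) (by omega)]
        exact hveq _ _ (by omega) (by omega) (by omega)
    apply hext
    rintro ⟨n, hn⟩
    have hd : ℓ = n + (1 + (ℓ - 1 - n)) := by omega
    rw [show ap ^ ℓ = ap ^ (n + (1 + (ℓ - 1 - n))) from by rw [← hd]]
    rw [pow_add, pow_add, pow_one, Module.End.mul_apply, Module.End.mul_apply,
      hpowap (ℓ - 1 - n) n (by omega),
      hveq (n + (ℓ - 1 - n)) (ℓ - 1) (by omega) (by omega) (by omega), hap2,
      map_smul, hpowap n 0 (by omega), hveq (0 + n) n (by omega) hn (by omega)]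
    rfl
  · -- am ^ ℓ
    have hpowam : ∀ (k n : ℕ) (hk : k ≤ n) (h : n ≤ ℓ - 1),
        (am ^ k) (v ⟨n, by omega⟩) =
          (∏ j ∈ Finset.range k, qIntC ε (n - j)) • v ⟨n - k, by omega⟩ := by
      intro k
      induction k with
      | zero => intro n hk h; simp
      | succ k ih =>
        intro n hk h
        obtain ⟨m, rfl⟩ : ∃ m, n = m + 1 := ⟨n - 1, by omega⟩
        rw [pow_succ, Module.End.mul_apply, ham1 m (by omega), map_smul,
          ih m (by omega) (by omega), Finset.prod_range_succ', smul_smul]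
        simp only [Nat.succ_sub_succ, Nat.sub_zero]
        rw [mul_comm]
    apply hext
    rintro ⟨n, hn⟩
    have hd : ℓ = ((ℓ - 1 - n) + 1) + n := by omega
    rw [show am ^ ℓ = am ^ (((ℓ - 1 - n) + 1) + n) from by rw [← hd]]
    rw [pow_add, Module.End.mul_apply, hpowam n n le_rfl (by omega),
      hveq (n - n) 0 (by omega) (by omega) (by omega), map_smul, pow_succ,
      Module.End.mul_apply, ham2, map_smul,
      hpowam (ℓ - 1 - n) (ℓ - 1) (by omega) le_rfl,
      hveq (ℓ - 1 - (ℓ - 1 - n)) n (by omega) hn (by omega)]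
    rw [smul_smul, smul_smul, LinearMap.smul_apply, Module.End.one_apply]
    congr 1
    have e1 : ∏ j ∈ Finset.range n, qIntC ε (n - j)
        = ∏ j ∈ Finset.range n, qIntC ε (j + 1) := by
      rw [← Finset.prod_range_reflect (fun j => qIntC ε (j + 1)) n]
      apply Finset.prod_congr rfl
      intro j hj
      have := Finset.mem_range.mp hj
      congr 1
      omega
    have e2 : ∏ j ∈ Finset.range (ℓ - 1 - n), qIntC ε (ℓ - 1 - j)
        = ∏ i ∈ Finset.range (ℓ - 1 - n), qIntC ε (n + i + 1) := by
      rw [← Finset.prod_range_reflect (fun i => qIntC ε (n + i + 1)) (ℓ - 1 - n)]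
      apply Finset.prod_congr rfl
      intro j hj
      have := Finset.mem_range.mp hj
      congr 1
      omega
    have e3 : ∏ m ∈ Finset.range (ℓ - 1), qIntC ε (m + 1)
        = (∏ m ∈ Finset.range n, qIntC ε (m + 1)) *
          ∏ i ∈ Finset.range (ℓ - 1 - n), qIntC ε (n + i + 1) := by
      rw [show ℓ - 1 = n + (ℓ - 1 - n) by omega, Finset.prod_range_add]
      simp
    rw [e1, e2, e3]
    ring
end

section
/- Let R be a commutative ring, q a unit of R, and A an associative unital R-algebra. Suppose a₊, a₋, w, w⁻¹ and a₊′, a₋′, w′, w′⁻¹ are elements of A such that each quadruple satisfies the q-oscillator relations and every element of the first quadruple commutes with every element of the second. Define e := a₋·a₊′, f := a₊·a₋′, k := w⁻¹·w′ and k⁻¹ := w·w′⁻¹. Then k·k⁻¹ = 1 = k⁻¹·k, and the triple (e, f, k) satisfies the U_q(sl₂) relations: k·e·k⁻¹ = q²·e, k·f·k⁻¹ = q⁻²·f, and (q − q⁻¹)·(e·f − f·e) = k − k⁻¹. (This is the Hayashi bosonisation of each sl₂-node of U_q(sl_n) by a pair of q-oscillators.) -/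
/-- The `q`-oscillator algebra `U_q′(h₄)` relations for elements
`a₊, a₋, w, w⁻¹` of an associative unital `R`-algebra. -/
def QOsc {R A : Type*} [CommRing R] [Ring A] [Algebra R A]
    (q : Rˣ) (ap am w winv : A) : Prop :=
  w * winv = 1 ∧ winv * w = 1 ∧
  w * ap * winv = (q : R) • ap ∧
  w * am * winv = ((q⁻¹ : Rˣ) : R) • am ∧
  am * ap - (q : R) • (ap * am) = winv ∧
  am * ap - ((q⁻¹ : Rˣ) : R) • (ap * am) = w

/-- the Hayashi bosonisation.  From two commuting `q`-oscillator
quadruples, the elements `e = a₋·a₊′`, `f = a₊·a₋′`, `k = w⁻¹·w′`,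
`k⁻¹ = w·w′⁻¹` satisfy the `U_q(sl₂)` relations. -/
theorem hayashi_bosonisation
    {R A : Type*} [CommRing R] [Ring A] [Algebra R A] (q : Rˣ)
    (ap am w winv ap' am' w' winv' : A)
    (h : QOsc q ap am w winv) (h' : QOsc q ap' am' w' winv')
    (hcomm : ∀ x ∈ ({ap, am, w, winv} : Set A),
      ∀ y ∈ ({ap', am', w', winv'} : Set A), Commute x y) :
    (winv * w') * (w * winv') = 1 ∧ (w * winv') * (winv * w') = 1 ∧
    (winv * w') * (am * ap') * (w * winv') = ((q : R) ^ 2) • (am * ap') ∧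
    (winv * w') * (ap * am') * (w * winv') = (((q⁻¹ : Rˣ) : R) ^ 2) • (ap * am') ∧
    ((q : R) - ((q⁻¹ : Rˣ) : R)) •
        ((am * ap') * (ap * am') - (ap * am') * (am * ap'))
      = winv * w' - w * winv' := by
  obtain ⟨h1, h2, h3, h4, h5, h6⟩ := h
  obtain ⟨h1', h2', h3', h4', h5', h6'⟩ := h'
  -- commutation facts
  have cpp : ap * ap' = ap' * ap := (hcomm ap (by simp) ap' (by simp)).eq
  have cmm : am * am' = am' * am := (hcomm am (by simp) am' (by simp)).eq
  have cmw' : am * w' = w' * am := (hcomm am (by simp) w' (by simp)).eq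
  have cpw' : ap * w' = w' * ap := (hcomm ap (by simp) w' (by simp)).eq
  have cww' : w * w' = w' * w := (hcomm w (by simp) w' (by simp)).eq
  have cwp' : w * ap' = ap' * w := (hcomm w (by simp) ap' (by simp)).eq
  have cwm' : w * am' = am' * w := (hcomm w (by simp) am' (by simp)).eq
  have hq : ((q⁻¹ : Rˣ) : R) * (q : R) = 1 := Units.inv_mul q
  have hq' : (q : R) * ((q⁻¹ : Rˣ) : R) = 1 := Units.mul_inv q
  -- conjugation identities
  have key1 : winv * am * w = (q : R) • am := by
    have h0 : winv * (w * am * winv) * w = ((q⁻¹ : Rˣ) : R) • (winv * am * w) := by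
      rw [h4, mul_smul_comm, smul_mul_assoc]
    have hl : winv * (w * am * winv) * w = am := by
      calc winv * (w * am * winv) * w = (winv * w) * am * (winv * w) := by
            noncomm_ring
        _ = am := by rw [h2]; simp
    rw [hl] at h0
    calc winv * am * w = (1 : R) • (winv * am * w) := (one_smul _ _).symm
      _ = ((q : R) * ((q⁻¹ : Rˣ) : R)) • (winv * am * w) := by rw [hq']
      _ = (q : R) • (((q⁻¹ : Rˣ) : R) • (winv * am * w)) := (smul_smul _ _ _).symm
      _ = (q : R) • am := by rw [← h0]
  have key2 : winv * ap * w = ((q⁻¹ : Rˣ) : R) • ap := by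
    have h0 : winv * (w * ap * winv) * w = (q : R) • (winv * ap * w) := by
      rw [h3, mul_smul_comm, smul_mul_assoc]
    have hl : winv * (w * ap * winv) * w = ap := by
      calc winv * (w * ap * winv) * w = (winv * w) * ap * (winv * w) := by
            noncomm_ring
        _ = ap := by rw [h2]; simp
    rw [hl] at h0
    calc winv * ap * w = (1 : R) • (winv * ap * w) := (one_smul _ _).symm
      _ = (((q⁻¹ : Rˣ) : R) * (q : R)) • (winv * ap * w) := by rw [hq]
      _ = ((q⁻¹ : Rˣ) : R) • ((q : R) • (winv * ap * w)) := (smul_smul _ _ _).symm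
      _ = ((q⁻¹ : Rˣ) : R) • ap := by rw [← h0]
  refine ⟨?_, ?_, ?_, ?_, ?_⟩
  · calc winv * w' * (w * winv') = winv * (w' * w) * winv' := by noncomm_ring
      _ = (winv * w) * (w' * winv') := by rw [← cww']; noncomm_ring
      _ = 1 := by rw [h2, h1']; simp
  · calc w * winv' * (winv * w') = w * (winv' * winv) * w' := by noncomm_ring
      _ = (w * winv) * (winv' * w') := by
          rw [← (hcomm winv (by simp) winv' (by simp)).eq]; noncomm_ring
      _ = 1 := by rw [h1, h2']; simp
  · calc winv * w' * (am * ap') * (w * winv')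
        = winv * (w' * am) * ap' * w * winv' := by noncomm_ring
      _ = winv * am * (w' * (ap' * w)) * winv' := by rw [← cmw']; noncomm_ring
      _ = winv * am * (w' * (w * ap')) * winv' := by rw [← cwp']
      _ = (winv * am * (w' * w)) * ap' * winv' := by noncomm_ring
      _ = (winv * am * w) * (w' * ap' * winv') := by rw [← cww']; noncomm_ring
      _ = ((q : R) • am) * ((q : R) • ap') := by rw [key1, h3']
      _ = ((q : R) ^ 2) • (am * ap') := by
          rw [smul_mul_assoc, mul_smul_comm, smul_smul, sq]
  · calc winv * w' * (ap * am') * (w * winv')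
        = winv * (w' * ap) * am' * w * winv' := by noncomm_ring
      _ = winv * ap * (w' * (am' * w)) * winv' := by rw [← cpw']; noncomm_ring
      _ = winv * ap * (w' * (w * am')) * winv' := by rw [← cwm']
      _ = (winv * ap * (w' * w)) * am' * winv' := by noncomm_ring
      _ = (winv * ap * w) * (w' * am' * winv') := by rw [← cww']; noncomm_ring
      _ = (((q⁻¹ : Rˣ) : R) • ap) * (((q⁻¹ : Rˣ) : R) • am') := by rw [key2, h4']
      _ = (((q⁻¹ : Rˣ) : R) ^ 2) • (ap * am') := by
          rw [smul_mul_assoc, mul_smul_comm, smul_smul, sq]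
  · -- the sl₂ commutator relation
    set c := (q : R) - ((q⁻¹ : Rˣ) : R) with hc
    have hP : c • (ap * am) = w - winv := by
      rw [hc, sub_smul, ← h5, ← h6]; abel
    have hP' : c • (ap' * am') = w' - winv' := by
      rw [hc, sub_smul, ← h5', ← h6']; abel
    have hef : (am * ap') * (ap * am') = (am * ap) * (ap' * am') := by
      calc am * ap' * (ap * am') = am * (ap' * ap) * am' := by noncomm_ring
        _ = (am * ap) * (ap' * am') := by rw [← cpp]; noncomm_ring
    have hfe : (ap * am') * (am * ap') = (ap * am) * (am' * ap') := by
      calc ap * am' * (am * ap') = ap * (am' * am) * ap' := by noncomm_ring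
        _ = (ap * am) * (am' * ap') := by rw [← cmm]; noncomm_ring
    have hmp : am * ap = (q : R) • (ap * am) + winv := by
      rw [← h5]; abel
    have hmp' : am' * ap' = ((q⁻¹ : Rˣ) : R) • (ap' * am') + w' := by
      rw [← h6']; abel
    have key : (am * ap') * (ap * am') - (ap * am') * (am * ap')
        = c • ((ap * am) * (ap' * am')) + winv * (ap' * am') - (ap * am) * w' := by
      rw [hef, hfe, hmp, hmp', hc]
      rw [add_mul, mul_add, smul_mul_assoc, mul_smul_comm, sub_smul]
      abel
    have e1 : c • ((ap * am) * (ap' * am')) = (w - winv) * (ap' * am') := by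
      rw [← smul_mul_assoc, hP]
    have e2 : c • ((w - winv) * (ap' * am')) = (w - winv) * (w' - winv') := by
      rw [← mul_smul_comm, hP']
    have e3 : c • (winv * (ap' * am')) = winv * (w' - winv') := by
      rw [← mul_smul_comm, hP']
    have e4 : c • ((ap * am) * w') = (w - winv) * w' := by
      rw [← smul_mul_assoc, hP]
    rw [key, smul_sub, smul_add, e1, e2, e3, e4]
    noncomm_ring
end

section
/- Let R be a commutative ring, q and r units of R, and A an associative unital R-algebra containing elements N, A₊, A₋, E satisfying the U_{qr}(h₄) relations. Then for every integer m ≥ 1 the following identities hold in A: q^m·N·A₊^m − q^{−m}·A₊^m·N = [m]_q·A₊^m; q^m·A₋^m·N − q^{−m}·N·A₋^m = [m]_q·A₋^m; and r^m·A₋·A₊^m − r^{−m}·A₊^m·A₋ = [m]_r·E·A₊^{m−1}. -/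
/-- The `q`-integer `[m]_q = ∑_{i=1}^{m} q^{m+1-2i}` for a unit `q` of a
commutative ring `R`. -/
def qInt {R : Type*} [CommRing R] (q : Rˣ) (n : ℕ) : R :=
  ∑ i ∈ Finset.range n, ((q ^ ((n : ℤ) - 1 - 2 * (i : ℤ)) : Rˣ) : R)

lemma qInt_one {R : Type*} [CommRing R] (q : Rˣ) : qInt q 1 = 1 := by
  simp [qInt]

lemma qInt_succ {R : Type*} [CommRing R] (q : Rˣ) (n : ℕ) :
    qInt q (n + 1) = (q : R) * qInt q n + ((q⁻¹ : Rˣ) : R) ^ n := by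
  unfold qInt
  rw [Finset.sum_range_succ, Finset.mul_sum]
  congr 1
  · refine Finset.sum_congr rfl fun i _ => ?_
    have hq : (q : R) = ((q ^ (1 : ℤ) : Rˣ) : R) := by simp
    rw [hq, ← Units.val_mul, ← zpow_add]
    congr 2
    push_cast
    ring
  · have h : ((q⁻¹ : Rˣ) : R) ^ n = ((q ^ (-(n : ℤ)) : Rˣ) : R) := by
      rw [← Units.val_pow_eq_pow_val]
      congr 1
      rw [inv_pow, ← zpow_natCast, ← zpow_neg]
    rw [h]
    congr 2
    push_cast
    ring

/-- the power identities in the 2-parameter deformed oscillator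
algebra `U_{qr}(h₄)`. -/
theorem qr_oscillator_power_identities
    {R A : Type*} [CommRing R] [Ring A] [Algebra R A]
    (q r : Rˣ) (N Ap Am E : A)
    (hEN : Commute E N) (hEp : Commute E Ap) (hEm : Commute E Am)
    (h1 : (q : R) • (N * Ap) - ((q⁻¹ : Rˣ) : R) • (Ap * N) = Ap)
    (h2 : (q : R) • (Am * N) - ((q⁻¹ : Rˣ) : R) • (N * Am) = Am)
    (h3 : (r : R) • (Am * Ap) - ((r⁻¹ : Rˣ) : R) • (Ap * Am) = E) :
    ∀ m : ℕ, 1 ≤ m →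
      ((q : R) ^ m) • (N * Ap ^ m) - (((q⁻¹ : Rˣ) : R) ^ m) • (Ap ^ m * N)
          = qInt q m • Ap ^ m ∧
      ((q : R) ^ m) • (Am ^ m * N) - (((q⁻¹ : Rˣ) : R) ^ m) • (N * Am ^ m)
          = qInt q m • Am ^ m ∧
      ((r : R) ^ m) • (Am * Ap ^ m) - (((r⁻¹ : Rˣ) : R) ^ m) • (Ap ^ m * Am)
          = qInt r m • (E * Ap ^ (m - 1)) := by
  intro m
  induction m with
  | zero => omega
  | succ n ih =>
    intro _
    rcases Nat.eq_zero_or_pos n with h0 | hpos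
    · subst h0
      refine ⟨?_, ?_, ?_⟩
      · simpa [qInt_one] using h1
      · simpa [qInt_one] using h2
      · simpa [qInt_one] using h3
    · obtain ⟨ih1, ih2, ih3⟩ := ih hpos
      refine ⟨?_, ?_, ?_⟩
      · -- part 1
        have key1 := congrArg (· * Ap) ih1
        simp only [sub_mul, smul_mul_assoc, mul_assoc] at key1
        have key2 := congrArg (Ap ^ n * ·) h1
        simp only [mul_sub, mul_smul_comm] at key2
        simp only [pow_succ, qInt_succ, mul_assoc]
        linear_combination (norm := module)
          (q : R) • key1 + ((q⁻¹ : Rˣ) : R) ^ n • key2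
      · -- part 2
        have key1 := congrArg (Am * ·) ih2
        simp only [mul_sub, mul_smul_comm, mul_assoc] at key1
        have key2 := congrArg (· * Am ^ n) h2
        simp only [sub_mul, smul_mul_assoc, mul_assoc] at key2
        simp only [pow_succ', pow_succ, qInt_succ, mul_assoc]
        linear_combination (norm := module)
          (q : R) • key1 + ((q⁻¹ : Rˣ) : R) ^ n • key2
      · -- part 3
        have hpow : Ap ^ (n - 1) * Ap = Ap ^ n := by
          rw [← pow_succ]
          congr 1
          omega
        have key1 := congrArg (· * Ap) ih3
        simp only [sub_mul, smul_mul_assoc, mul_assoc, hpow] at key1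
        have key2 := congrArg (Ap ^ n * ·) h3
        simp only [mul_sub, mul_smul_comm] at key2
        rw [show Ap ^ n * E = E * Ap ^ n from (hEp.pow_right n).eq.symm] at key2
        simp only [pow_succ, qInt_succ, mul_assoc, Nat.add_sub_cancel]
        linear_combination (norm := module)
          (r : R) • key1 + ((r⁻¹ : Rˣ) : R) ^ n • key2
end

section
/- Let A be an associative unital ℂ-algebra, ℓ an integer with ℓ > 2, ε ∈ ℂ a primitive ℓ-th root of unity, and set ℓ′ = ℓ if ℓ is odd and ℓ′ = ℓ/2 if ℓ is even. Suppose N, A₊, A₋, E ∈ A satisfy the U_{qr}(h₄) relations with q = r = ε. Then A₊^{ℓ′} and A₋^{ℓ′} are central in the subalgebra generated by N, A₊, A₋, E: each of A₊^{ℓ′} and A₋^{ℓ′} commutes with each of N, A₊, A₋, E. -/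
private lemma key_aux {A : Type*} [Ring A] [Algebra ℂ A] (u : ℂ) (x y f : A)
    (hf : f * x = x * f) (h : y * x = u • (x * y) + f) :
    ∀ k : ℕ, y * x ^ (k+1)
      = u^(k+1) • (x^(k+1) * y) + (∑ i ∈ Finset.range (k+1), u^i) • (x^k * f) := by
  intro k
  induction k with
  | zero => simpa using h
  | succ k ih =>
    calc y * x ^ (k+2) = (y * x ^ (k+1)) * x := by rw [pow_succ, mul_assoc]
      _ = (u^(k+1) • (x^(k+1) * y) + (∑ i ∈ Finset.range (k+1), u^i) • (x^k * f)) * x := by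
          rw [ih]
      _ = u^(k+1) • (x^(k+1) * (y * x)) + (∑ i ∈ Finset.range (k+1), u^i) • (x^(k+1) * f) := by
          simp only [add_mul, smul_mul_assoc, mul_assoc, hf, pow_succ]
      _ = u^(k+1) • (x^(k+1) * (u • (x * y) + f))
            + (∑ i ∈ Finset.range (k+1), u^i) • (x^(k+1) * f) := by rw [h]
      _ = u^(k+2) • (x^(k+2) * y) + (∑ i ∈ Finset.range (k+2), u^i) • (x^(k+1) * f) := by
          rw [mul_add, mul_smul_comm, smul_add, smul_smul,
            show x^(k+1) * (x * y) = x^(k+2) * y from by rw [show x^(k+2) = x^(k+1) * x from pow_succ x (k+1), mul_assoc],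
            ← pow_succ,
            Finset.sum_range_succ (fun i => u ^ i) (k+1), add_smul]
          abel

private lemma key {A : Type*} [Ring A] [Algebra ℂ A] (u : ℂ) (n : ℕ) (hn : 0 < n)
    (hu1 : u ≠ 1) (hun : u ^ n = 1) (x y f : A)
    (hf : f * x = x * f) (h : y * x = u • (x * y) + f) :
    Commute (x ^ n) y := by
  obtain ⟨k, rfl⟩ := Nat.exists_eq_add_of_lt hn
  simp only [Nat.zero_add] at hun ⊢
  have hs : (∑ i ∈ Finset.range (k + 1), u ^ i) = 0 := by
    rw [geom_sum_eq hu1, hun]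
    simp
  have := key_aux u x y f hf h k
  rw [hs, hun, one_smul, zero_smul, add_zero] at this
  exact this.symm

/-- at a primitive `ℓ`-th root of unity `ε` (with `ℓ > 2`, and
`ℓ′ = ℓ` for `ℓ` odd, `ℓ′ = ℓ/2` for `ℓ` even), the elements `A₊^{ℓ′}` and
`A₋^{ℓ′}` of the `qr`-oscillator algebra `U_{εε}(h₄)` commute with each of
`N, A₊, A₋, E`. -/
theorem qr_oscillator_root_of_unity_central
    {A : Type*} [Ring A] [Algebra ℂ A]
    (ℓ ℓ' : ℕ) (hl : 2 < ℓ)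
    (hodd : Odd ℓ → ℓ' = ℓ) (heven : Even ℓ → ℓ' = ℓ / 2)
    (ε : ℂ) (hε : IsPrimitiveRoot ε ℓ)
    (N Ap Am E : A)
    (hEN : Commute E N) (hEp : Commute E Ap) (hEm : Commute E Am)
    (h1 : ε • (N * Ap) - ε⁻¹ • (Ap * N) = Ap)
    (h2 : ε • (Am * N) - ε⁻¹ • (N * Am) = Am)
    (h3 : ε • (Am * Ap) - ε⁻¹ • (Ap * Am) = E) :
    ∀ y ∈ ({N, Ap, Am, E} : Set A),
      Commute (Ap ^ ℓ') y ∧ Commute (Am ^ ℓ') y := by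
  have hε0 : ε ≠ 0 := hε.ne_zero (by omega)
  have hℓ'pos : 0 < ℓ' := by
    rcases Nat.even_or_odd ℓ with he | ho
    · rw [heven he]; omega
    · rw [hodd ho]; omega
  have h2ℓ' : ε ^ (2 * ℓ') = 1 := by
    rcases Nat.even_or_odd ℓ with he | ho
    · rw [heven he, show 2 * (ℓ / 2) = ℓ from by
        obtain ⟨m, rfl⟩ := he; omega]
      exact hε.pow_eq_one
    · rw [hodd ho, mul_comm, pow_mul, hε.pow_eq_one, one_pow]
  have hu : (ε ^ 2) ^ ℓ' = 1 := by rw [← pow_mul]; exact h2ℓ'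
  have hune : ε ^ 2 ≠ 1 := hε.pow_ne_one_of_pos_of_lt (by norm_num) hl
  have hu' : (ε⁻¹ ^ 2) ^ ℓ' = 1 := by
    rw [inv_pow, inv_pow, hu, inv_one]
  have hune' : ε⁻¹ ^ 2 ≠ 1 := by
    rw [inv_pow, Ne, inv_eq_one]; exact hune
  -- rewrite relations into the `key` form
  have r1 : N * Ap = (ε⁻¹ ^ 2) • (Ap * N) + ε⁻¹ • Ap := by
    have := congrArg (fun z => ε⁻¹ • z) h1
    simp only [smul_sub, smul_smul, inv_mul_cancel₀ hε0, one_smul] at this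
    rw [sub_eq_iff_eq_add] at this
    rw [sq, this, add_comm, mul_smul]
  have r3 : Am * Ap = (ε⁻¹ ^ 2) • (Ap * Am) + ε⁻¹ • E := by
    have := congrArg (fun z => ε⁻¹ • z) h3
    simp only [smul_sub, smul_smul, inv_mul_cancel₀ hε0, one_smul] at this
    rw [sub_eq_iff_eq_add] at this
    rw [sq, this, add_comm, mul_smul]
  have r2 : N * Am = (ε ^ 2) • (Am * N) + (-ε) • Am := by
    have := congrArg (fun z => ε • z) h2
    simp only [smul_sub, smul_smul, mul_inv_cancel₀ hε0, one_smul] at this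
    rw [sub_eq_iff_eq_add] at this
    rw [sq, neg_smul, ← sub_eq_add_neg, eq_sub_iff_add_eq, add_comm, mul_smul]
    rw [← mul_smul]
    exact this.symm
  have r3' : Ap * Am = (ε ^ 2) • (Am * Ap) + (-ε) • E := by
    have := congrArg (fun z => ε • z) h3
    simp only [smul_sub, smul_smul, mul_inv_cancel₀ hε0, one_smul] at this
    rw [sub_eq_iff_eq_add] at this
    rw [sq, neg_smul, ← sub_eq_add_neg, eq_sub_iff_add_eq, add_comm, mul_smul]
    rw [← mul_smul]
    exact this.symm
  have cpN : Commute (Ap ^ ℓ') N :=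
    key (ε⁻¹ ^ 2) ℓ' hℓ'pos hune' hu' Ap N (ε⁻¹ • Ap)
      (by rw [smul_mul_assoc, mul_smul_comm]) r1
  have cpAm : Commute (Ap ^ ℓ') Am :=
    key (ε⁻¹ ^ 2) ℓ' hℓ'pos hune' hu' Ap Am (ε⁻¹ • E)
      (by rw [smul_mul_assoc, mul_smul_comm, hEp.eq]) r3
  have cmN : Commute (Am ^ ℓ') N :=
    key (ε ^ 2) ℓ' hℓ'pos hune hu Am N ((-ε) • Am)
      (by rw [smul_mul_assoc, mul_smul_comm]) r2
  have cmAp : Commute (Am ^ ℓ') Ap :=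
    key (ε ^ 2) ℓ' hℓ'pos hune hu Am Ap ((-ε) • E)
      (by rw [smul_mul_assoc, mul_smul_comm, hEm.eq]) r3'
  intro y hy
  simp only [Set.mem_insert_iff, Set.mem_singleton_iff] at hy
  rcases hy with rfl | rfl | rfl | rfl
  · exact ⟨cpN, cmN⟩
  · exact ⟨(Commute.refl _).pow_left ℓ', cmAp⟩
  · exact ⟨cpAm, (Commute.refl _).pow_left ℓ'⟩
  · exact ⟨hEp.symm.pow_left ℓ', hEm.symm.pow_left ℓ'⟩
end

section
/- Let K be a field, let q, r ∈ K be nonzero, let c, j ∈ K with c ≠ 0, and assume the deformed integers (k)_r := Σ_{i=1}^{k} r^{1−2i} are nonzero for every integer k ≥ 1. Let F be the K-vector space with basis {u_k : k ∈ ℕ} and define K-linear endomorphisms of F by A₊·u_k = u_{k+1}; A₋·u_k = c·(k)_r·u_{k−1} (with A₋·u₀ = 0); N·u_k = (q^{−2k}·j + (k)_q)·u_k; E·u_k = c·u_k. Then these operators satisfy the U_{qr}(h₄) relations, and the Fock module F is irreducible: every K-subspace of F invariant under N, A₊, A₋ and E is either {0} or all of F. -/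
/-! Each relation, evaluated on the basis vector `u_k`, reduces to a scalar identity: for
`N A₊` and `A₋ N` it is `q λ_{k+1} - q⁻¹ λ_k = 1` for the weights `λ_k = q^{-2k} j + (k)_q`, for
`A₋ A₊` it is `r (k+1)_r - r⁻¹ (k)_r = 1`, and both come from `x (k+1)_x - x⁻¹ (k)_x = 1`.
For irreducibility, `A₋` moves the top coefficient of a vector one step down, scaled by the
nonzero factor `c (k)_r`; so a nonzero invariant subspace contains `u₀`, hence every
`u_k = A₊^k u₀`. -/

def pIntF {K : Type*} [Field K] (r : K) (k : ℕ) : K :=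
  ∑ i ∈ Finset.range k, r ^ (-1 - 2 * (i : ℤ))

section DeformedInteger

variable {K : Type*} [Field K]

theorem pIntF_succ (x : K) (k : ℕ) :
    pIntF x (k + 1) = pIntF x k + x ^ (-1 - 2 * (k : ℤ)) :=
  Finset.sum_range_succ _ _

theorem mul_zpow_sub_two {x : K} (hx : x ≠ 0) (n : ℤ) : x * x ^ (n - 2) = x⁻¹ * x ^ n := by
  rw [← zpow_one_add₀ hx, ← zpow_neg_one, ← zpow_add₀ hx]
  ring_nf

theorem mul_pIntF_succ_sub_inv_mul_pIntF {x : K} (hx : x ≠ 0) (k : ℕ) :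
    x * pIntF x (k + 1) - x⁻¹ * pIntF x k = 1 := by
  induction k with
  | zero => simp [pIntF, hx]
  | succ k ih =>
    have hpow : x * x ^ (-1 - 2 * ((k + 1 : ℕ) : ℤ)) = x⁻¹ * x ^ (-1 - 2 * (k : ℤ)) := by
      rw [← mul_zpow_sub_two hx]; push_cast; ring_nf
    rw [pIntF_succ x (k + 1)]
    linear_combination ih + hpow - x⁻¹ * pIntF_succ x k

theorem fock_weight_step {q : K} (hq : q ≠ 0) (j : K) (k : ℕ) :
    q * (q ^ (-(2 * ((k + 1 : ℕ) : ℤ))) * j + pIntF q (k + 1))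
      - q⁻¹ * (q ^ (-(2 * (k : ℤ))) * j + pIntF q k) = 1 := by
  have hpow : q * q ^ (-(2 * ((k + 1 : ℕ) : ℤ))) = q⁻¹ * q ^ (-(2 * (k : ℤ))) := by
    rw [← mul_zpow_sub_two hq]; push_cast; ring_nf
  linear_combination j * hpow + mul_pIntF_succ_sub_inv_mul_pIntF hq k

end DeformedInteger

open Finsupp

section Relations

variable {R : Type*} [CommRing R] {N Ap Am : Module.End R (ℕ →₀ R)}

theorem smul_mul_sub_smul_mul_raising (a b : R) {w : ℕ → R}
    (hN : ∀ k, N (single k 1) = w k • single k 1)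
    (hAp : ∀ k, Ap (single k 1) = single (k + 1) 1)
    (hw : ∀ k, a * w (k + 1) - b * w k = 1) :
    a • (N * Ap) - b • (Ap * N) = Ap := by
  refine Finsupp.basisSingleOne.ext fun k => ?_
  simp only [coe_basisSingleOne, LinearMap.sub_apply, LinearMap.smul_apply,
    Module.End.mul_apply, hAp, hN, map_smul, smul_smul, ← sub_smul, hw, one_smul]

theorem smul_mul_sub_smul_mul_lowering (a b : R) {w μ : ℕ → R}
    (hN : ∀ k, N (single k 1) = w k • single k 1)
    (hAm0 : Am (single 0 1) = 0) (hAm : ∀ k, Am (single (k + 1) 1) = μ (k + 1) • single k 1)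
    (hw : ∀ k, a * w (k + 1) - b * w k = 1) :
    a • (Am * N) - b • (N * Am) = Am := by
  refine Finsupp.basisSingleOne.ext fun k => ?_
  cases k with
  | zero =>
    simp only [coe_basisSingleOne, LinearMap.sub_apply, LinearMap.smul_apply,
      Module.End.mul_apply, hN, hAm0, map_smul, map_zero, smul_zero, sub_zero]
  | succ k =>
    simp only [coe_basisSingleOne, LinearMap.sub_apply, LinearMap.smul_apply,
      Module.End.mul_apply, hAm, hN, map_smul, smul_smul, ← sub_smul]
    congr 1
    linear_combination μ (k + 1) * hw k

theorem smul_mul_sub_smul_mul_lowering_raising (a b c : R) {μ : ℕ → R}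
    (hAp : ∀ k, Ap (single k 1) = single (k + 1) 1)
    (hAm0 : Am (single 0 1) = 0) (hAm : ∀ k, Am (single (k + 1) 1) = μ (k + 1) • single k 1)
    (hμ0 : μ 0 = 0) (hμ : ∀ k, a * μ (k + 1) - b * μ k = c) :
    a • (Am * Ap) - b • (Ap * Am) = c • 1 := by
  refine Finsupp.basisSingleOne.ext fun k => ?_
  cases k with
  | zero =>
    have h1 : a * μ 1 = c := by simpa [hμ0] using hμ 0
    simp only [coe_basisSingleOne, LinearMap.sub_apply, LinearMap.smul_apply,
      Module.End.mul_apply, hAp, hAm, hAm0, map_zero, smul_zero, sub_zero, smul_smul, h1,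
      Module.End.one_apply]
  | succ k =>
    simp only [coe_basisSingleOne, LinearMap.sub_apply, LinearMap.smul_apply,
      Module.End.mul_apply, hAp, hAm, map_smul, smul_smul, ← sub_smul, hμ, Module.End.one_apply]

theorem lowering_apply {μ : ℕ → R} (hAm0 : Am (single 0 1) = 0)
    (hAm : ∀ k, Am (single (k + 1) 1) = μ (k + 1) • single k 1) (v : ℕ →₀ R) (n : ℕ) :
    Am v n = μ (n + 1) * v (n + 1) := by
  induction v using Finsupp.induction_linear with
  | zero => simp
  | add f g hf hg => simp only [map_add, Finsupp.add_apply, hf, hg, mul_add]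
  | single k a =>
    rw [← smul_single_one, map_smul]
    cases k with
    | zero => simp [hAm0]
    | succ k =>
      rcases eq_or_ne k n with rfl | h
      · simp [hAm, mul_comm]
      · simp [hAm, h]

end Relations

section Irreducibility

variable {K : Type*} [Field K] {Ap Am : Module.End K (ℕ →₀ K)} {μ : ℕ → K}
  {p : Submodule K (ℕ →₀ K)}

theorem single_zero_mem_of_lowering_invariant_of_forall_lt
    (hAm0 : Am (single 0 1) = 0) (hAm : ∀ k, Am (single (k + 1) 1) = μ (k + 1) • single k 1)
    (hμ : ∀ k, μ (k + 1) ≠ 0) (hp : ∀ v ∈ p, Am v ∈ p) (n : ℕ) :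
    ∀ v ∈ p, v ≠ 0 → (∀ m, n < m → v m = 0) → single 0 1 ∈ p := by
  induction n with
  | zero =>
    intro v hv hv0 hbound
    have hv00 : v 0 ≠ 0 := fun h => hv0 <| Finsupp.ext fun m => by
      cases m with
      | zero => exact h
      | succ m => exact hbound _ m.succ_pos
    have hv_eq : single 0 1 = (v 0)⁻¹ • v := Finsupp.ext fun m => by
      cases m with
      | zero => simp [hv00]
      | succ m => simp [hbound _ m.succ_pos]
    exact hv_eq ▸ p.smul_mem _ hv
  | succ n ih =>
    intro v hv hv0 hbound
    by_cases htop : v (n + 1) = 0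
    · refine ih v hv hv0 fun m hm => ?_
      rcases (Nat.succ_le_of_lt hm).eq_or_lt with rfl | hm
      · exact htop
      · exact hbound m hm
    · refine ih (Am v) (hp v hv) (fun h => ?_) (fun m hm => ?_)
      · have := lowering_apply hAm0 hAm v n
        simp [h, hμ n, htop] at this
      · rw [lowering_apply hAm0 hAm, hbound _ (by omega), mul_zero]

theorem single_zero_mem_of_lowering_invariant
    (hAm0 : Am (single 0 1) = 0) (hAm : ∀ k, Am (single (k + 1) 1) = μ (k + 1) • single k 1)
    (hμ : ∀ k, μ (k + 1) ≠ 0) (hp : ∀ v ∈ p, Am v ∈ p) (hp0 : p ≠ ⊥) :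
    single 0 1 ∈ p := by
  obtain ⟨v, hv, hv0⟩ := Submodule.exists_mem_ne_zero_of_ne_bot hp0
  refine single_zero_mem_of_lowering_invariant_of_forall_lt hAm0 hAm hμ hp
    (v.support.sup id) v hv hv0 fun m hm => ?_
  by_contra h
  exact hm.not_ge (Finset.le_sup (f := id) (Finsupp.mem_support_iff.2 h))

theorem eq_top_of_raising_invariant (hAp : ∀ k, Ap (single k 1) = single (k + 1) 1)
    (hp : ∀ v ∈ p, Ap v ∈ p) (h0 : single 0 1 ∈ p) : p = ⊤ := by
  have hsingle : ∀ k, single k 1 ∈ p := Nat.rec h0 fun k hk => hAp k ▸ hp _ hk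
  rw [eq_top_iff, ← Finsupp.basisSingleOne.span_eq, Submodule.span_le]
  rintro _ ⟨k, rfl⟩
  simpa using hsingle k

theorem eq_bot_or_eq_top_of_raising_lowering_invariant
    (hAp : ∀ k, Ap (single k 1) = single (k + 1) 1)
    (hAm0 : Am (single 0 1) = 0) (hAm : ∀ k, Am (single (k + 1) 1) = μ (k + 1) • single k 1)
    (hμ : ∀ k, μ (k + 1) ≠ 0) (hpAp : ∀ v ∈ p, Ap v ∈ p) (hpAm : ∀ v ∈ p, Am v ∈ p) :
    p = ⊥ ∨ p = ⊤ :=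
  or_iff_not_imp_left.2 fun hp0 =>
    eq_top_of_raising_invariant hAp hpAp (single_zero_mem_of_lowering_invariant hAm0 hAm hμ hpAm hp0)

end Irreducibility

/-- the Fock module of the 2-parameter deformed oscillator
algebra `U_{qr}(h₄)`: the operators on the vector space with basis `{u_k}`
(modelled by `ℕ →₀ K`) satisfy the `U_{qr}(h₄)` relations, and the module is
irreducible when `c ≠ 0` and all `(k)_r` with `k ≥ 1` are nonzero. -/
theorem qr_oscillator_fock_module
    {K : Type*} [Field K] (q r c j : K)
    (hq0 : q ≠ 0) (hr0 : r ≠ 0) (hc0 : c ≠ 0)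
    (hrk : ∀ k : ℕ, 1 ≤ k → pIntF r k ≠ 0)
    (N Ap Am E : Module.End K (ℕ →₀ K))
    (hAp : ∀ k : ℕ, Ap (Finsupp.single k 1) = Finsupp.single (k + 1) 1)
    (hAm0 : Am (Finsupp.single 0 1) = 0)
    (hAm : ∀ k : ℕ, Am (Finsupp.single (k + 1) 1)
      = (c * pIntF r (k + 1)) • Finsupp.single k 1)
    (hN : ∀ k : ℕ, N (Finsupp.single k 1)
      = (q ^ (-(2 * (k : ℤ))) * j + pIntF q k) • Finsupp.single k 1)
    (hE : ∀ k : ℕ, E (Finsupp.single k 1) = c • Finsupp.single k 1) :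
    Commute E N ∧ Commute E Ap ∧ Commute E Am ∧
    q • (N * Ap) - q⁻¹ • (Ap * N) = Ap ∧
    q • (Am * N) - q⁻¹ • (N * Am) = Am ∧
    r • (Am * Ap) - r⁻¹ • (Ap * Am) = E ∧
    (∀ p : Submodule K (ℕ →₀ K),
      (∀ v ∈ p, N v ∈ p) → (∀ v ∈ p, Ap v ∈ p) → (∀ v ∈ p, Am v ∈ p) →
      (∀ v ∈ p, E v ∈ p) → p = ⊥ ∨ p = ⊤) := by
  have hE_eq : E = c • 1 := Finsupp.basisSingleOne.ext fun k => by simpa using hE k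
  have hE_comm (T : Module.End K (ℕ →₀ K)) : Commute E T :=
    hE_eq ▸ (Commute.one_left T).smul_left c
  have hμ (k : ℕ) : r * (c * pIntF r (k + 1)) - r⁻¹ * (c * pIntF r k) = c := by
    linear_combination c * mul_pIntF_succ_sub_inv_mul_pIntF hr0 k
  refine ⟨hE_comm N, hE_comm Ap, hE_comm Am,
    smul_mul_sub_smul_mul_raising q q⁻¹ hN hAp (fock_weight_step hq0 j),
    smul_mul_sub_smul_mul_lowering (μ := fun k => c * pIntF r k) q q⁻¹ hN hAm0 hAm
      (fock_weight_step hq0 j),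
    hE_eq ▸ smul_mul_sub_smul_mul_lowering_raising (μ := fun k => c * pIntF r k) r r⁻¹ c
      hAp hAm0 hAm (by simp [pIntF]) hμ,
    fun p _ hpAp hpAm _ => eq_bot_or_eq_top_of_raising_lowering_invariant
      (μ := fun k => c * pIntF r k) hAp hAm0 hAm
      (fun k => mul_ne_zero hc0 (hrk _ k.succ_pos)) hpAp hpAm⟩
end

section
/- Let R be a commutative ring, r a unit of R, and A an associative unital R-algebra. Suppose A₊, A₋, E ∈ A satisfy r·A₋·A₊ − r⁻¹·A₊·A₋ = E with E commuting with A₊ and A₋, and suppose a, b, c, d ∈ A commute with each of A₊, A₋, E and satisfy a·c = r²·c·a, b·d = r²·d·b, a·d − r²·c·b = 1, and d·a − r⁻²·b·c = 1. Then the transformed elements A₊′ := a·A₊ + b·A₋ and A₋′ := c·A₊ + d·A₋ again satisfy the r-Heisenberg-Weyl relation: r·A₋′·A₊′ − r⁻¹·A₊′·A₋′ = E. (This is the covariance of U_r(h₃) under the left coaction of the quantum matrix group.) -/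
/-- covariance of the `r`-Heisenberg-Weyl algebra `U_r(h₃)` under
the left coaction of the quantum matrix group: the transformed elements
`A₊′ = a·A₊ + b·A₋` and `A₋′ = c·A₊ + d·A₋` again satisfy the relation
`r·A₋′·A₊′ - r⁻¹·A₊′·A₋′ = E`. -/
theorem r_heisenberg_covariance
    {R A : Type*} [CommRing R] [Ring A] [Algebra R A]
    (r : Rˣ) (Ap Am E a b c d : A)
    (hrel : (r : R) • (Am * Ap) - ((r⁻¹ : Rˣ) : R) • (Ap * Am) = E)
    (hEp : Commute E Ap) (hEm : Commute E Am)
    (hcomm : ∀ t ∈ ({a, b, c, d} : Set A), ∀ u ∈ ({Ap, Am, E} : Set A),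
      Commute t u)
    (hac : a * c = (((r : R)) ^ 2) • (c * a))
    (hbd : b * d = (((r : R)) ^ 2) • (d * b))
    (had : a * d - (((r : R)) ^ 2) • (c * b) = 1)
    (hda : d * a - ((((r⁻¹ : Rˣ) : R)) ^ 2) • (b * c) = 1) :
    (r : R) • ((c * Ap + d * Am) * (a * Ap + b * Am))
      - ((r⁻¹ : Rˣ) : R) • ((a * Ap + b * Am) * (c * Ap + d * Am)) = E := by
  set s : R := (r : R) with hs
  set si : R := ((r⁻¹ : Rˣ) : R) with hsi
  have hssi : s * si = 1 := r.mul_inv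
  have hsis : si * s = 1 := r.inv_mul
  have hs1 : si * s ^ 2 = s := by rw [sq, ← mul_assoc, hsis, one_mul]
  have hs2 : s * si ^ 2 = si := by rw [sq, ← mul_assoc, hssi, one_mul]
  have haP : ∀ x : A, Ap * (a * x) = a * (Ap * x) := fun x => by
    rw [← mul_assoc, (hcomm a (by simp) Ap (by simp)).symm.eq, mul_assoc]
  have haM : ∀ x : A, Am * (a * x) = a * (Am * x) := fun x => by
    rw [← mul_assoc, (hcomm a (by simp) Am (by simp)).symm.eq, mul_assoc]
  have hbP : ∀ x : A, Ap * (b * x) = b * (Ap * x) := fun x => by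
    rw [← mul_assoc, (hcomm b (by simp) Ap (by simp)).symm.eq, mul_assoc]
  have hbM : ∀ x : A, Am * (b * x) = b * (Am * x) := fun x => by
    rw [← mul_assoc, (hcomm b (by simp) Am (by simp)).symm.eq, mul_assoc]
  have hcP : ∀ x : A, Ap * (c * x) = c * (Ap * x) := fun x => by
    rw [← mul_assoc, (hcomm c (by simp) Ap (by simp)).symm.eq, mul_assoc]
  have hcM : ∀ x : A, Am * (c * x) = c * (Am * x) := fun x => by
    rw [← mul_assoc, (hcomm c (by simp) Am (by simp)).symm.eq, mul_assoc]
  have hdP : ∀ x : A, Ap * (d * x) = d * (Ap * x) := fun x => by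
    rw [← mul_assoc, (hcomm d (by simp) Ap (by simp)).symm.eq, mul_assoc]
  have hdM : ∀ x : A, Am * (d * x) = d * (Am * x) := fun x => by
    rw [← mul_assoc, (hcomm d (by simp) Am (by simp)).symm.eq, mul_assoc]
  have hac' : ∀ x : A, a * (c * x) = (s ^ 2) • (c * (a * x)) := fun x => by
    rw [← mul_assoc, hac, smul_mul_assoc, mul_assoc]
  have hbd' : ∀ x : A, b * (d * x) = (s ^ 2) • (d * (b * x)) := fun x => by
    rw [← mul_assoc, hbd, smul_mul_assoc, mul_assoc]
  have had1 : a * d = 1 + (s ^ 2) • (c * b) := by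
    rw [← had]; abel
  have hda1 : d * a = 1 + (si ^ 2) • (b * c) := by
    rw [← hda]; abel
  have had' : ∀ x : A, a * (d * x) = x + (s ^ 2) • (c * (b * x)) := fun x => by
    rw [← mul_assoc, had1, add_mul, one_mul, smul_mul_assoc, mul_assoc]
  have hda' : ∀ x : A, d * (a * x) = x + (si ^ 2) • (b * (c * x)) := fun x => by
    rw [← mul_assoc, hda1, add_mul, one_mul, smul_mul_assoc, mul_assoc]
  rw [← hrel]
  simp only [mul_add, add_mul, mul_assoc, haP, haM, hbP, hbM, hcP, hcM, hdP, hdM,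
    hac', hbd', had', hda', smul_add, smul_smul, hs1, hs2]
  module
end

section
/- Let R be a commutative ring, t a unit of R, and A an associative unital R-algebra. Suppose F : ℤ → A and G : ℤ → A are families of elements satisfying the quadratic Serre relation: for all m, n ∈ ℤ, F(m+1)·G(n) − t·G(n)·F(m+1) = t·F(m)·G(n+1) − G(n+1)·F(m). Then for all m, n ∈ ℤ and every natural number ℓ: F(m)·G(n) − t·G(n)·F(m) = (t² − 1)·Σ_{p=1}^{ℓ} t^{p−1}·G(n+p)·F(m−p) + t^{ℓ}·( t·F(m−ℓ−1)·G(n+ℓ+1) − G(n+ℓ+1)·F(m−ℓ−1) ). In particular, taking F = G (so F(m) = E_m^{±,i}, t = q_i^{±2}), if moreover 2x = 0 implies x = 0 in A, then E_{n+1}·E_n − t·E_n·E_{n+1} = 0 for all n. -/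
/-- the consequence of the quadratic Serre relations of Drinfeld's
loop presentation.  If `F(m+1)·G(n) - t·G(n)·F(m+1) = t·F(m)·G(n+1) - G(n+1)·F(m)`
for all `m, n ∈ ℤ`, then the ladder identity holds for every `ℓ ∈ ℕ`; and in
the case `F = G`, in a 2-torsion-free algebra, `F(n+1)·F(n) = t·F(n)·F(n+1)`. -/
theorem quadratic_serre_ladder
    {R A : Type*} [CommRing R] [Ring A] [Algebra R A]
    (t : Rˣ) (F G : ℤ → A)
    (hqs : ∀ m n : ℤ,
      F (m + 1) * G n - (t : R) • (G n * F (m + 1))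
        = (t : R) • (F m * G (n + 1)) - G (n + 1) * F m) :
    (∀ (m n : ℤ) (ℓ : ℕ),
      F m * G n - (t : R) • (G n * F m)
        = ((t : R) ^ 2 - 1) •
            (∑ p ∈ Finset.range ℓ,
              ((t : R) ^ p) • (G (n + p + 1) * F (m - p - 1)))
          + ((t : R) ^ ℓ) •
              ((t : R) • (F (m - ℓ - 1) * G (n + ℓ + 1))
                - G (n + ℓ + 1) * F (m - ℓ - 1))) ∧
    (F = G → (∀ x : A, x + x = 0 → x = 0) →
      ∀ n : ℤ, F (n + 1) * G n - (t : R) • (G n * F (n + 1)) = 0) := by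
  have key : ∀ a b : ℤ,
      (t : R) • ((t : R) • (F (a - 1) * G (b + 1)) - G (b + 1) * F (a - 1))
        = (t : R) • (F a * G b) - ((t : R) ^ 2) • (G b * F a) := by
    intro a b
    have h := hqs (a - 1) b
    rw [sub_add_cancel] at h
    rw [← h, smul_sub, smul_smul, sq]
  constructor
  · intro m n ℓ
    induction ℓ with
    | zero =>
        have h := hqs (m - 1) n
        rw [sub_add_cancel] at h
        simp [h]
    | succ ℓ ih =>
        rw [Finset.sum_range_succ, smul_add, add_assoc]
        rw [ih]
        congr 1
        have hk := key (m - ℓ - 1) (n + ℓ + 1)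
        push_cast
        have e1 : m - (ℓ + 1 : ℤ) - 1 = m - ℓ - 1 - 1 := by ring
        have e2 : n + (ℓ + 1 : ℤ) + 1 = n + ℓ + 1 + 1 := by ring
        rw [e1, e2, pow_succ (t : R) ℓ, ← smul_smul, hk]
        module
  · intro hFG h2 n
    subst hFG
    apply h2
    have h := hqs n n
    nth_rewrite 1 [h]
    abel
end

section
/- Let A be an associative unital ℂ-algebra, ℓ an integer with ℓ > 2, ε ∈ ℂ a primitive ℓ-th root of unity, and set ℓ′ = ℓ if ℓ is odd and ℓ′ = ℓ/2 if ℓ is even. Let I be a finite index set with positive integers (d_i)_{i∈I} satisfying ε^{2d_i} ≠ 1, and an integer matrix (a_{ij})_{i,j∈I}. Let γ be an invertible element of A, and let H : I → ℤ∖{0} → A be a family of elements such that γ commutes with every H_m^i and such that for all i, j ∈ I and all nonzero integers m, n: m·(ε^{d_j} − ε^{−d_j})·(H_m^i·H_n^j − H_n^j·H_m^i) = [a_{ij}·m]_{ε^{d_i}}·(γ^m − γ^{−m}) if m + n = 0, and = 0 otherwise (the integer m acting as m·1 ∈ ℂ). Then for every i ∈ I and every nonzero integer m, the element H_{m·ℓ′}^i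 commutes with every H_n^j (j ∈ I, n ≠ 0): the imaginary root vectors whose mode number is a multiple of ℓ′ are central in the Heisenberg subalgebra U_ε(Ĥ) at the root of unity ε. -/
/-- The `q`-integer `[N]_t = (t^N - t^{-N})/(t - t⁻¹)` for a complex number `t`
and an integer `N`. -/
noncomputable def qNumZ (t : ℂ) (N : ℤ) : ℂ := (t ^ N - t ^ (-N)) / (t - t⁻¹)

/-- in the Heisenberg subalgebra of a quantum affine algebra at a
primitive `ℓ`-th root of unity `ε` (with `ℓ′ = ℓ` for `ℓ` odd and `ℓ′ = ℓ/2`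
for `ℓ` even), the imaginary root vectors `H^i_{m·ℓ′}` whose mode number is a
multiple of `ℓ′` commute with all the `H^j_n`, i.e. they are central in
`U_ε(Ĥ)`. -/
theorem heisenberg_root_of_unity_centre
    {A : Type*} [Ring A] [Algebra ℂ A]
    (ℓ ℓ' : ℕ) (hl : 2 < ℓ)
    (hodd : Odd ℓ → ℓ' = ℓ) (heven : Even ℓ → ℓ' = ℓ / 2)
    (ε : ℂ) (hε : IsPrimitiveRoot ε ℓ)
    {I : Type*} [Fintype I] (d : I → ℕ) (hd : ∀ i, 0 < d i)
    (hd2 : ∀ i, ε ^ (2 * d i) ≠ 1)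
    (a : I → I → ℤ) (γ : Aˣ) (H : I → ℤ → A)
    (hγ : ∀ (i : I) (m : ℤ), Commute ((γ : Aˣ) : A) (H i m))
    (hrel : ∀ (i j : I) (m n : ℤ), m ≠ 0 → n ≠ 0 →
      ((m : ℂ) * (ε ^ ((d j : ℤ)) - ε ^ (-((d j : ℤ))))) •
          (H i m * H j n - H j n * H i m)
        = if m + n = 0 then
            qNumZ (ε ^ ((d i : ℤ))) (a i j * m) •
              (((γ ^ m : Aˣ) : A) - ((γ ^ (-m) : Aˣ) : A))
          else 0) :
    ∀ (i : I) (m : ℤ), m ≠ 0 → ∀ (j : I) (n : ℤ), n ≠ 0 →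
      Commute (H i (m * (ℓ' : ℤ))) (H j n) := by
  intro i m hm j n hn
  have hε0 : ε ≠ 0 := hε.ne_zero (by omega)
  have hl' : 0 < ℓ' := by
    rcases Nat.even_or_odd ℓ with he | ho
    · rw [heven he]; omega
    · rw [hodd ho]; omega
  have h2l : (ℓ : ℤ) ∣ 2 * (ℓ' : ℤ) := by
    rcases Nat.even_or_odd ℓ with he | ho
    · obtain ⟨k, hk⟩ := he
      have h : 2 * ℓ' = ℓ := by rw [heven ⟨k, hk⟩]; omega
      exact ⟨1, by rw [mul_one]; exact_mod_cast h⟩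
    · rw [hodd ho]; exact ⟨2, by ring⟩
  set M : ℤ := m * (ℓ' : ℤ) with hMdef
  have hM0 : M ≠ 0 := mul_ne_zero hm (by exact_mod_cast hl'.ne')
  have hcj : (ε ^ ((d j : ℤ)) - ε ^ (-((d j : ℤ)))) ≠ 0 := by
    intro h
    apply hd2 j
    have h' : ε ^ ((d j : ℤ)) = ε ^ (-((d j : ℤ))) := sub_eq_zero.mp h
    have hkey : ε ^ ((2 * d j : ℕ) : ℤ) = 1 := by
      push_cast
      rw [show (2 : ℤ) * (d j) = (d j) + (d j) by ring, zpow_add₀ hε0]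
      nth_rewrite 2 [h']
      rw [← zpow_add₀ hε0]
      simp
    rw [zpow_natCast] at hkey
    exact hkey
  set cc : ℂ := (M : ℂ) * (ε ^ ((d j : ℤ)) - ε ^ (-((d j : ℤ)))) with hccdef
  have hcc : cc ≠ 0 := mul_ne_zero (by exact_mod_cast hM0) hcj
  have c := hrel i j M n hM0 hn
  have key : H i M * H j n - H j n * H i M = 0 := by
    have crhs : cc • (H i M * H j n - H j n * H i M) = 0 := by
      rw [c]
      by_cases hmn : M + n = 0
      · rw [if_pos hmn]
        have hq : qNumZ (ε ^ ((d i : ℤ))) (a i j * M) = 0 := by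
          set N : ℤ := a i j * M with hNdef
          have hone : ε ^ (2 * (d i : ℤ) * N) = 1 := by
            refine (hε.zpow_eq_one_iff_dvd _).mpr ?_
            exact dvd_trans h2l ⟨(d i : ℤ) * a i j * m, by rw [hNdef, hMdef]; ring⟩
          have h2 : ε ^ ((d i : ℤ) * N) = ε ^ (-((d i : ℤ) * N)) := by
            rw [zpow_neg]
            refine eq_inv_of_mul_eq_one_left ?_
            rw [← zpow_add₀ hε0,
              show (d i : ℤ) * N + (d i : ℤ) * N = 2 * (d i : ℤ) * N by ring]
            exact hone
          have hnum : (ε ^ ((d i : ℤ))) ^ N - (ε ^ ((d i : ℤ))) ^ (-N) = 0 := by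
            rw [← zpow_mul, ← zpow_mul, mul_neg, sub_eq_zero]
            exact h2
          unfold qNumZ
          rw [hnum, zero_div]
        rw [hq, zero_smul]
      · rw [if_neg hmn]
    calc H i M * H j n - H j n * H i M
        = (cc⁻¹ * cc) • (H i M * H j n - H j n * H i M) := by
          rw [inv_mul_cancel₀ hcc, one_smul]
      _ = cc⁻¹ • (cc • (H i M * H j n - H j n * H i M)) := by rw [mul_smul]
      _ = 0 := by rw [crhs, smul_zero]
  exact sub_eq_zero.mp key
end
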